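/- arXiv:2211.01041 — 7 statements merged into one kernel-verified Lean document; each statement's English description precedes it below -/
import Mathlib

section
/- Let r ≥ 2 be an integer and let G be a finite simple graph with maximum degree Δ(G). Then the r-hued chromatic number of G satisfies χ_r(G) ≤ (r − 1)(Δ(G) + 1) + 2. -/
open SimpleGraph

/-- A proper coloring `φ : V → Fin k` is `r`-hued if every vertex sees at least
`min r (deg v)` distinct colors on its neighborhood. -/
def IsRHuedColoring {V : Type*} (G : SimpleGraph V) (r k : ℕ) (φ : V → Fin k) : Prop :=
  (∀ ⦃u v⦄, G.Adj u v → φ u ≠ φ v) ∧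
  ∀ v : V, min r (G.neighborSet v).ncard ≤ (φ '' G.neighborSet v).ncard

/-- The `r`-hued chromatic number of a graph: the least `k` admitting an `r`-hued
`k`-coloring. -/
noncomputable def rHuedChromNum {V : Type*} (G : SimpleGraph V) (r : ℕ) : ℕ :=
  sInf {k | ∃ φ : V → Fin k, IsRHuedColoring G r k φ}

/-- The maximum degree of a finite simple graph. -/
noncomputable def maxDeg {V : Type*} [Fintype V] (G : SimpleGraph V) : ℕ :=
  Finset.univ.sup fun v => (G.neighborSet v).ncard

/-! Choose for every vertex `w` a set `S w` of `min r (deg w)` neighbours of `w` and add a clique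
on each `S w`; every proper colouring of the resulting graph is `r`-hued. This graph is
`((r - 1) Δ + r)`-degenerate: inside a vertex set `X`, a vertex `x` gains at most `r - 1` new
neighbours for each `w` with `x ∈ S w`, and the pairs `x ∈ S w ∩ X` are at most `min r deg_X w`
for `w ∈ X` and are charged to the edges leaving `X` for `w ∉ X`. So some vertex of `X` has at
most `(r - 1) Δ + r` neighbours in `X`, and a greedy colouring uses `(r - 1)(Δ + 1) + 2` colours.
-/

open Finset

theorem add_sub_one_mul_min_add_le {r d e D : ℕ} (hr : 2 ≤ r) (hde : d + e ≤ D) :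
    d + (r - 1) * (min r d + e) ≤ (r - 1) * D + r := by
  obtain ⟨s, rfl⟩ : ∃ s, r = s + 1 := ⟨r - 1, by omega⟩
  rw [Nat.add_sub_cancel]
  have hD : s * (d + e) ≤ s * D := Nat.mul_le_mul_left s hde
  rcases le_total d (s + 1) with hd | hd
  · rw [min_eq_right hd]
    nlinarith
  · rw [min_eq_left hd]
    nlinarith [Nat.mul_le_mul_left (s - 1) hd]

namespace SimpleGraph

variable {V : Type*}

theorem colorable_of_forall_exists_card_adj_le [Fintype V] [DecidableEq V] (H : SimpleGraph V)
    [DecidableRel H.Adj] (D : ℕ)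
    (hH : ∀ X : Finset V, X.Nonempty → ∃ x ∈ X, #{y ∈ X | H.Adj x y} ≤ D) :
    H.Colorable (D + 1) := by
  suffices ∀ X : Finset V, ∃ c : V → Fin (D + 1),
      ∀ ⦃x⦄, x ∈ X → ∀ ⦃y⦄, y ∈ X → H.Adj x y → c x ≠ c y by
    obtain ⟨c, hc⟩ := this univ
    exact ⟨Coloring.mk c fun h => hc (mem_univ _) (mem_univ _) h⟩
  intro X
  induction X using Finset.strongInduction with
  | H X ih =>
  rcases X.eq_empty_or_nonempty with rfl | hX
  · exact ⟨0, by simp⟩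
  obtain ⟨x, hxX, hx⟩ := hH X hX
  obtain ⟨c, hc⟩ := ih (X.erase x) (erase_ssubset hxX)
  obtain ⟨k, -, hkc⟩ : ∃ k ∈ univ, k ∉ {y ∈ X | H.Adj x y}.image c := by
    refine exists_mem_notMem_of_card_lt_card ?_
    simpa using card_image_le.trans_lt (Nat.lt_succ_of_le hx)
  have hk : ∀ ⦃y⦄, y ∈ X → H.Adj x y → k ≠ c y := fun y hy hxy h =>
    hkc (mem_image.2 ⟨y, mem_filter.2 ⟨hy, hxy⟩, h.symm⟩)
  refine ⟨Function.update c x k, fun y hy z hz hyz => ?_⟩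
  simp only [Function.update_apply]
  split_ifs with hyx hzx hzx
  · exact (H.loopless.irrefl _ (hyx ▸ hzx ▸ hyz)).elim
  · exact hk hz (hyx ▸ hyz)
  · exact (hk hy (hzx ▸ hyz.symm)).symm
  · exact hc (mem_erase.2 ⟨hyx, hy⟩) (mem_erase.2 ⟨hzx, hz⟩) hyz

theorem ncard_neighborSet_eq_degree [Fintype V] (G : SimpleGraph V) [DecidableRel G.Adj] (v : V) :
    (G.neighborSet v).ncard = G.degree v := by
  rw [← card_neighborFinset_eq_degree, neighborFinset_def, Set.ncard_eq_toFinset_card']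

theorem sum_compl_card_neighborFinset_inter [Fintype V] [DecidableEq V] (G : SimpleGraph V)
    [DecidableRel G.Adj] (X : Finset V) :
    ∑ w ∈ Xᶜ, #(G.neighborFinset w ∩ X) = ∑ x ∈ X, #(G.neighborFinset x \ X) := by
  have := sum_card_bipartiteAbove_eq_sum_card_bipartiteBelow (s := Xᶜ) (t := X) G.Adj
  convert this using 3 with w - x -
  · ext y; simp [bipartiteAbove, and_comm]
  · ext y; simp [bipartiteBelow, G.adj_comm y x, and_comm]

def withCliques (G : SimpleGraph V) (S : V → Finset V) : SimpleGraph V where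
  Adj x y := x ≠ y ∧ (G.Adj x y ∨ ∃ w, x ∈ S w ∧ y ∈ S w)
  symm.symm _ _ := fun ⟨hne, h⟩ =>
    ⟨hne.symm, h.imp (fun h => h.symm) fun ⟨w, hx, hy⟩ => ⟨w, hy, hx⟩⟩
  loopless.irrefl _ h := h.1 rfl

@[simp]
theorem withCliques_adj {G : SimpleGraph V} {S : V → Finset V} {x y : V} :
    (G.withCliques S).Adj x y ↔ x ≠ y ∧ (G.Adj x y ∨ ∃ w, x ∈ S w ∧ y ∈ S w) :=
  Iff.rfl

instance [Fintype V] [DecidableEq V] (G : SimpleGraph V) [DecidableRel G.Adj]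
    (S : V → Finset V) : DecidableRel (G.withCliques S).Adj :=
  fun x y => inferInstanceAs (Decidable (x ≠ y ∧ (G.Adj x y ∨ ∃ w, x ∈ S w ∧ y ∈ S w)))

theorem isRHuedColoring_of_withCliques [Fintype V] {G : SimpleGraph V} [DecidableRel G.Adj]
    {S : V → Finset V} {r k : ℕ} (c : (G.withCliques S).Coloring (Fin k))
    (hSN : ∀ w, S w ⊆ G.neighborFinset w) (hS : ∀ w, #(S w) = min r (G.degree w)) :
    IsRHuedColoring G r k c := by
  refine ⟨fun u v h => c.valid (withCliques_adj.2 ⟨h.ne, .inl h⟩), fun v => ?_⟩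
  have hinj : Set.InjOn c (S v) := fun x hx y hy hxy => by
    by_contra hne
    exact c.valid (withCliques_adj.2 ⟨hne, .inr ⟨v, hx, hy⟩⟩) hxy
  have hsub : (S v : Set V) ⊆ G.neighborSet v := fun x hx => by simpa using hSN v hx
  calc min r (G.neighborSet v).ncard = #(S v) := by rw [ncard_neighborSet_eq_degree, hS]
    _ = (c '' S v).ncard := by rw [hinj.ncard_image, Set.ncard_coe_finset]
    _ ≤ (c '' G.neighborSet v).ncard := Set.ncard_le_ncard (Set.image_mono hsub) (Set.toFinite _)

section withCliques

variable [Fintype V] [DecidableEq V] {G : SimpleGraph V} [DecidableRel G.Adj] {S : V → Finset V}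
  {r : ℕ}

theorem card_withCliques_adj_le (hS : ∀ w, #(S w) ≤ r) (X : Finset V) (x : V) :
    #{y ∈ X | (G.withCliques S).Adj x y} ≤
      #(G.neighborFinset x ∩ X) + (r - 1) * #{w | x ∈ S w} := by
  have hsub : {y ∈ X | (G.withCliques S).Adj x y} ⊆
      (G.neighborFinset x ∩ X) ∪ ({w | x ∈ S w} : Finset V).biUnion fun w => (S w).erase x := by
    rintro y hy
    rw [mem_filter, withCliques_adj] at hy
    obtain ⟨hyX, hxy, hadj | ⟨w, hxw, hyw⟩⟩ := hy
    · exact mem_union_left _ (mem_inter.2 ⟨(G.mem_neighborFinset x y).2 hadj, hyX⟩)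
    · exact mem_union_right _ (mem_biUnion.2 ⟨w, by simpa using hxw, mem_erase.2 ⟨hxy.symm, hyw⟩⟩)
  have herase : ∀ w ∈ ({w | x ∈ S w} : Finset V), #((S w).erase x) ≤ r - 1 := fun w hw => by
    rw [card_erase_of_mem (by simpa using hw)]
    exact Nat.sub_le_sub_right (hS w) 1
  calc #{y ∈ X | (G.withCliques S).Adj x y}
      ≤ #(G.neighborFinset x ∩ X) + ∑ w ∈ {w | x ∈ S w}, #((S w).erase x) :=
        (card_le_card hsub).trans <| (card_union_le _ _).trans <| by gcongr; exact card_biUnion_le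
    _ ≤ #(G.neighborFinset x ∩ X) + (r - 1) * #{w | x ∈ S w} := by
        grw [sum_le_card_nsmul _ _ _ herase, smul_eq_mul, mul_comm]

theorem sum_card_withCliques_adj_le (hSN : ∀ w, S w ⊆ G.neighborFinset w)
    (hS : ∀ w, #(S w) ≤ r) (X : Finset V) :
    ∑ x ∈ X, #{y ∈ X | (G.withCliques S).Adj x y} ≤
      ∑ x ∈ X, (#(G.neighborFinset x ∩ X) +
        (r - 1) * (min r #(G.neighborFinset x ∩ X) + #(G.neighborFinset x \ X))) := by
  have hmem : ∀ w, #{x ∈ X | x ∈ S w} ≤ #(G.neighborFinset w ∩ X) := fun w => by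
    rw [filter_mem_eq_inter, inter_comm]; gcongr; exact hSN w
  calc ∑ x ∈ X, #{y ∈ X | (G.withCliques S).Adj x y}
      ≤ ∑ x ∈ X, (#(G.neighborFinset x ∩ X) + (r - 1) * #{w | x ∈ S w}) :=
        sum_le_sum fun x _ => card_withCliques_adj_le hS X x
    _ = ∑ x ∈ X, #(G.neighborFinset x ∩ X) + (r - 1) * ∑ w, #{x ∈ X | x ∈ S w} := by
        have hdouble : ∑ x ∈ X, #{w | x ∈ S w} = ∑ w, #{x ∈ X | x ∈ S w} :=
          sum_card_bipartiteAbove_eq_sum_card_bipartiteBelow _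
        rw [sum_add_distrib, ← mul_sum, hdouble]
    _ ≤ ∑ x ∈ X, #(G.neighborFinset x ∩ X) + (r - 1) * (∑ w ∈ X, min r #(G.neighborFinset w ∩ X)
          + ∑ w ∈ Xᶜ, #(G.neighborFinset w ∩ X)) := by
        rw [← sum_add_sum_compl X]
        refine Nat.add_le_add_left (Nat.mul_le_mul_left _ (add_le_add ?_ ?_)) _
        · exact sum_le_sum fun w _ =>
            le_min ((card_le_card fun x hx => (mem_filter.1 hx).2).trans (hS w)) (hmem w)
        · exact sum_le_sum fun w _ => hmem w
    _ = _ := by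
        rw [sum_compl_card_neighborFinset_inter, ← sum_add_distrib, mul_sum, ← sum_add_distrib]

theorem exists_card_withCliques_adj_le (hSN : ∀ w, S w ⊆ G.neighborFinset w)
    (hS : ∀ w, #(S w) ≤ r) (hr : 2 ≤ r) {D : ℕ} (hD : ∀ v, G.degree v ≤ D) {X : Finset V}
    (hX : X.Nonempty) : ∃ x ∈ X, #{y ∈ X | (G.withCliques S).Adj x y} ≤ (r - 1) * D + r := by
  refine exists_le_of_sum_le hX ((sum_card_withCliques_adj_le hSN hS X).trans
    (sum_le_sum fun x _ => ?_))
  have hsplit := card_inter_add_card_sdiff (G.neighborFinset x) X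
  rw [card_neighborFinset_eq_degree] at hsplit
  exact add_sub_one_mul_min_add_le hr (hsplit.trans_le (hD x))

theorem withCliques_colorable (hSN : ∀ w, S w ⊆ G.neighborFinset w) (hS : ∀ w, #(S w) ≤ r)
    (hr : 2 ≤ r) {D : ℕ} (hD : ∀ v, G.degree v ≤ D) :
    (G.withCliques S).Colorable ((r - 1) * D + r + 1) :=
  colorable_of_forall_exists_card_adj_le _ _ fun _ hX =>
    exists_card_withCliques_adj_le hSN hS hr hD hX

end withCliques

end SimpleGraph

/-- Brooks-type bound: for every finite simple graph `G` and every `r ≥ 2`,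
`χ_r(G) ≤ (r - 1)(Δ(G) + 1) + 2`. -/
theorem rHuedChromNum_le_of_two_le {V : Type*} [Fintype V] (G : SimpleGraph V)
    (r : ℕ) (hr : 2 ≤ r) :
    rHuedChromNum G r ≤ (r - 1) * (maxDeg G + 1) + 2 := by
  classical
  have hD : ∀ v, G.degree v ≤ maxDeg G := fun v =>
    G.ncard_neighborSet_eq_degree v ▸ le_sup (f := fun v => (G.neighborSet v).ncard) (mem_univ v)
  choose S hSN hS using fun w =>
    exists_subset_card_eq (min_le_right r #(G.neighborFinset w))
  obtain ⟨c⟩ := G.withCliques_colorable hSN (fun w => (hS w).trans_le (min_le_left _ _)) hr hD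
  calc rHuedChromNum G r ≤ (r - 1) * maxDeg G + r + 1 :=
        Nat.sInf_le ⟨c, G.isRHuedColoring_of_withCliques c hSN hS⟩
    _ = (r - 1) * (maxDeg G + 1) + 2 := by
        obtain ⟨s, rfl⟩ : ∃ s, r = s + 1 := ⟨r - 1, by omega⟩
        rw [Nat.add_sub_cancel]
        ring
end

section
/- Let r ≥ 2 and suppose (V, 𝓑) is a Steiner system S(2, r, n). Then in every r-hued coloring φ of the Levi graph of (V, 𝓑), the point-vertices receive pairwise distinct colors; that is, the restriction of φ to V is injective. -/
open SimpleGraph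

/-- A Steiner system `S(2, r, n)`: `V` has `n` elements, the blocks are `r`-element
subsets of `V`, and every `2`-element subset of `V` lies in exactly one block. -/
def IsSteinerSystem {α : Type*} (r n : ℕ) (V : Finset α) (B : Finset (Finset α)) : Prop :=
  V.card = n ∧ (∀ b ∈ B, b ⊆ V ∧ b.card = r) ∧
  ∀ p : Finset α, p ⊆ V → p.card = 2 → ∃! b, b ∈ B ∧ p ⊆ b

/-- The Levi (incidence) graph of a set system: points on the left, blocks on the right,
with an edge when the point lies in the block. -/
def leviGraph {α : Type*} (V : Finset α) (B : Finset (Finset α)) :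
    SimpleGraph ({x // x ∈ V} ⊕ {b // b ∈ B}) :=
  SimpleGraph.fromRel fun u w =>
    match u, w with
    | Sum.inl x, Sum.inr b => (x : α) ∈ (b : Finset α)
    | _, _ => False

/-- In every `r`-hued coloring of the Levi graph of a Steiner system `S(2, r, n)`
(`r ≥ 2`), the point-vertices receive pairwise distinct colors. -/
theorem steiner_levi_points_injective {α : Type*} {r n k : ℕ} (hr : 2 ≤ r)
    (V : Finset α) (B : Finset (Finset α)) (hS : IsSteinerSystem r n V B)
    (φ : ({x // x ∈ V} ⊕ {b // b ∈ B}) → Fin k)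
    (hφ : IsRHuedColoring (leviGraph V B) r k φ) :
    Function.Injective fun x : {x // x ∈ V} => φ (Sum.inl x) := by
  classical
  intro x y hxy
  by_contra hne
  have hxy' : (x : α) ≠ (y : α) := fun h => hne (Subtype.ext h)
  obtain ⟨-, hB, hpair⟩ := hS
  have hp : ({(x : α), (y : α)} : Finset α) ⊆ V := by
    intro z hz
    simp only [Finset.mem_insert, Finset.mem_singleton] at hz
    rcases hz with h | h <;> simp [h, x.2, y.2]
  have hcard : ({(x : α), (y : α)} : Finset α).card = 2 := by
    rw [Finset.card_insert_of_notMem (by simpa using hxy'), Finset.card_singleton]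
  obtain ⟨b, ⟨hbB, hpb⟩, -⟩ := hpair _ hp hcard
  have hxb : (x : α) ∈ b := hpb (by simp)
  have hyb : (y : α) ∈ b := hpb (by simp)
  set bs : {b // b ∈ B} := ⟨b, hbB⟩
  set S := (leviGraph V B).neighborSet (Sum.inr bs) with hSdef
  have hadj : ∀ w, w ∈ S ↔ ∃ z : {x // x ∈ V}, w = Sum.inl z ∧ (z : α) ∈ b := by
    intro w
    cases w with
    | inl z =>
      constructor
      · intro _; exact ⟨z, rfl, by
          have := ‹Sum.inl z ∈ S›
          simp only [hSdef, SimpleGraph.mem_neighborSet, leviGraph,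
            SimpleGraph.fromRel_adj] at this
          exact this.2.elim (fun h => h.elim) id⟩
      · rintro ⟨z', hz', hzb⟩
        cases hz'
        simp only [hSdef, SimpleGraph.mem_neighborSet, leviGraph, SimpleGraph.fromRel_adj]
        exact ⟨by simp, Or.inr hzb⟩
    | inr b' =>
      constructor
      · intro h
        simp only [hSdef, SimpleGraph.mem_neighborSet, leviGraph,
          SimpleGraph.fromRel_adj] at h
        exact absurd h.2 (by simp)
      · rintro ⟨z', hz', -⟩; exact absurd hz' (by simp)
  have hSeq : S = Sum.inl '' {z : {x // x ∈ V} | (z : α) ∈ b} := by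
    ext w
    rw [hadj]
    constructor
    · rintro ⟨z, rfl, hz⟩; exact ⟨z, hz, rfl⟩
    · rintro ⟨z, hz, rfl⟩; exact ⟨z, rfl, hz⟩
  have hTcard : ({z : {x // x ∈ V} | (z : α) ∈ b}).ncard = r := by
    have hbV : b ⊆ V := (hB b hbB).1
    have : {z : {x // x ∈ V} | (z : α) ∈ b} =
        (fun z : {a // a ∈ b} => (⟨(z : α), hbV z.2⟩ : {x // x ∈ V})) '' Set.univ := by
      ext z
      constructor
      · intro hz; exact ⟨⟨(z : α), hz⟩, trivial, rfl⟩
      · rintro ⟨w, -, rfl⟩; exact w.2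
    rw [this, Set.ncard_image_of_injective _ (fun a a' h => Subtype.ext (by
      simpa using congrArg Subtype.val h)), Set.ncard_univ, Nat.card_eq_fintype_card,
      Fintype.card_coe, (hB b hbB).2]
  have hScard : S.ncard = r := by
    rw [hSeq, Set.ncard_image_of_injective _ Sum.inl_injective, hTcard]
  have hle : r ≤ (φ '' S).ncard := by
    have := hφ.2 (Sum.inr bs)
    rwa [show (leviGraph V B).neighborSet (Sum.inr bs) = S from rfl, hScard, min_self] at this
  have himg : (φ '' S).ncard = S.ncard := le_antisymm (Set.ncard_image_le S.toFinite)
    (hScard ▸ hle)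
  have hinj : Set.InjOn φ S := Set.injOn_of_ncard_image_eq himg S.toFinite
  have hxS : Sum.inl x ∈ S := (hadj _).2 ⟨x, rfl, hxb⟩
  have hyS : Sum.inl y ∈ S := (hadj _).2 ⟨y, rfl, hyb⟩
  exact hne (Sum.inl_injective (hinj hxS hyS hxy))
end

section
/- Let r ≥ 2 be an integer. If a Steiner system S(2, r, n) exists, then there is a bipartite finite simple graph G of girth at least 6 with χ_r(G) ≥ n; namely, the Levi graph of the Steiner system is bipartite, has girth at least 6, and satisfies χ_r(G) ≥ n. -/
open SimpleGraph

/-!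
The Levi graph is bipartite, so its cycles are even. A 4-cycle would be two distinct points
lying on two distinct common blocks, which the Steiner condition forbids; hence the girth is
at least 6. Every block has `r` neighbours, so an `r`-hued coloring is injective on each block;
as any two points share a block, the points alone already need `n` distinct colors.
-/

namespace SimpleGraph

variable {W : Type*} {G : SimpleGraph W}

lemma Walk.IsCycle.length_ne_four {u : W} {w : G.Walk u u} (hw : w.IsCycle)
    (hG : ∀ v₁ v₂, v₁ ≠ v₂ → (G.commonNeighbors v₁ v₂).Subsingleton) : w.length ≠ 4 := by
  intro h4
  have hadj (i : ℕ) (hi : i < 4) : G.Adj (w.getVert i) (w.getVert (i + 1)) :=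
    w.adj_getVert_succ (h4 ▸ hi)
  have hlast : w.getVert 4 = w.getVert 0 := by rw [← h4, Walk.getVert_length, Walk.getVert_zero]
  have h02 : w.getVert 0 ≠ w.getVert 2 :=
    hw.getVert_sub_one_ne_getVert_add_one (i := 1) (by omega)
  have h13 : w.getVert 1 ≠ w.getVert 3 :=
    hw.getVert_sub_one_ne_getVert_add_one (i := 2) (by omega)
  refine h13 (hG _ _ h02 ?_ ?_)
  · exact G.mem_commonNeighbors.2 ⟨hadj 0 (by omega), (hadj 1 (by omega)).symm⟩
  · exact G.mem_commonNeighbors.2 ⟨hlast ▸ (hadj 3 (by omega)).symm, hadj 2 (by omega)⟩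

lemma six_le_egirth (h2 : G.Colorable 2)
    (hG : ∀ v₁ v₂, v₁ ≠ v₂ → (G.commonNeighbors v₁ v₂).Subsingleton) : 6 ≤ G.egirth := by
  refine le_egirth.2 fun u w hw => ?_
  have h3 := hw.three_le_length
  have h4 := hw.length_ne_four hG
  obtain ⟨m, hm⟩ := two_colorable_iff_forall_loop_even.1 h2 u w
  exact_mod_cast (show 6 ≤ w.length by omega)

end SimpleGraph

namespace IsRHuedColoring

variable {W : Type*} {G : SimpleGraph W} {r k : ℕ} {φ : W → Fin k}

lemma injOn_neighborSet (hφ : IsRHuedColoring G r k φ) {v : W}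
    (hv : (G.neighborSet v).ncard ≤ r) (hfin : (G.neighborSet v).Finite) :
    Set.InjOn φ (G.neighborSet v) := by
  refine Set.injOn_of_ncard_image_eq (le_antisymm (Set.ncard_image_le hfin) ?_) hfin
  simpa [min_eq_right hv] using hφ.2 v

end IsRHuedColoring

lemma le_rHuedChromNum {W : Type*} [Finite W] {G : SimpleGraph W} {r n : ℕ}
    (h : ∀ k (φ : W → Fin k), IsRHuedColoring G r k φ → n ≤ k) : n ≤ rHuedChromNum G r := by
  obtain ⟨m, ⟨e⟩⟩ := Finite.exists_equiv_fin W
  refine le_csInf ⟨m, e, fun u v huv => e.injective.ne huv.ne, fun v => ?_⟩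
    fun k ⟨φ, hφ⟩ => h k φ hφ
  rw [Set.ncard_image_of_injective _ e.injective]
  exact min_le_right _ _

namespace IsSteinerSystem

variable {α : Type*} {r n : ℕ} {V : Finset α} {B : Finset (Finset α)}

lemma existsUnique_block (hS : IsSteinerSystem r n V B) {x y : α} (hx : x ∈ V) (hy : y ∈ V)
    (hxy : x ≠ y) : ∃! b, b ∈ B ∧ x ∈ b ∧ y ∈ b := by
  classical
  have hpair : ({x, y} : Finset α) ⊆ V := by simp [Finset.insert_subset_iff, hx, hy]
  simpa [Finset.insert_subset_iff] using hS.2.2 {x, y} hpair (Finset.card_pair hxy)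

end IsSteinerSystem

section LeviGraph

variable {α : Type*} {V : Finset α} {B : Finset (Finset α)}

@[simp] lemma leviGraph_adj_inl_inr {x : {x // x ∈ V}} {b : {b // b ∈ B}} :
    (leviGraph V B).Adj (.inl x) (.inr b) ↔ (x : α) ∈ (b : Finset α) := by
  simp [leviGraph]

@[simp] lemma leviGraph_adj_inr_inl {x : {x // x ∈ V}} {b : {b // b ∈ B}} :
    (leviGraph V B).Adj (.inr b) (.inl x) ↔ (x : α) ∈ (b : Finset α) := by
  simp [leviGraph]

@[simp] lemma leviGraph_not_adj_inl_inl {x y : {x // x ∈ V}} :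
    ¬ (leviGraph V B).Adj (.inl x) (.inl y) := by
  simp [leviGraph]

@[simp] lemma leviGraph_not_adj_inr_inr {b c : {b // b ∈ B}} :
    ¬ (leviGraph V B).Adj (.inr b) (.inr c) := by
  simp [leviGraph]

lemma leviGraph_colorable_two (V : Finset α) (B : Finset (Finset α)) :
    (leviGraph V B).Colorable 2 :=
  ⟨Coloring.mk (Sum.elim (fun _ => 0) (fun _ => 1)) (by rintro (x | b) (y | c) h <;> simp_all)⟩

lemma neighborSet_leviGraph_inr (b : {b // b ∈ B}) :
    (leviGraph V B).neighborSet (.inr b) = Sum.inl '' (Subtype.val ⁻¹' (b : Set α)) := by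
  ext (x | c) <;> simp

lemma ncard_neighborSet_leviGraph_inr {b : {b // b ∈ B}} (hb : (b : Finset α) ⊆ V) :
    ((leviGraph V B).neighborSet (.inr b)).ncard = (b : Finset α).card := by
  rw [neighborSet_leviGraph_inr, Set.ncard_image_of_injective _ Sum.inl_injective,
    Set.ncard_preimage_of_injective_subset_range Subtype.val_injective, Set.ncard_coe_finset]
  simpa using hb

variable {r n : ℕ}

lemma IsSteinerSystem.eq_of_mem_of_mem (hS : IsSteinerSystem r n V B) {x y : {x // x ∈ V}}
    {b c : {b // b ∈ B}} (hxy : x ≠ y) (hb : (x : α) ∈ (b : Finset α) ∧ (y : α) ∈ (b : Finset α))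
    (hc : (x : α) ∈ (c : Finset α) ∧ (y : α) ∈ (c : Finset α)) : b = c :=
  Subtype.ext <|
    (hS.existsUnique_block x.2 y.2 (Subtype.coe_ne_coe.2 hxy)).unique ⟨b.2, hb⟩ ⟨c.2, hc⟩

lemma IsSteinerSystem.commonNeighbors_leviGraph_subsingleton (hS : IsSteinerSystem r n V B)
    (u v : {x // x ∈ V} ⊕ {b // b ∈ B}) (huv : u ≠ v) :
    ((leviGraph V B).commonNeighbors u v).Subsingleton := by
  intro p hp q hq
  rw [mem_commonNeighbors] at hp hq
  by_contra hpq
  rcases u with x | b <;> rcases v with y | c <;> rcases p with x' | b' <;>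
    rcases q with y' | c' <;> simp at hp hq huv hpq
  · exact hpq (hS.eq_of_mem_of_mem huv hp hq)
  · exact huv (hS.eq_of_mem_of_mem hpq ⟨hp.1, hq.1⟩ ⟨hp.2, hq.2⟩)

lemma IsSteinerSystem.injective_comp_inl (hS : IsSteinerSystem r n V B) {k : ℕ}
    {φ : {x // x ∈ V} ⊕ {b // b ∈ B} → Fin k} (hφ : IsRHuedColoring (leviGraph V B) r k φ) :
    Function.Injective (φ ∘ Sum.inl) := by
  intro x y hxy
  by_contra hne
  obtain ⟨b, ⟨hb, hxb, hyb⟩, -⟩ := hS.existsUnique_block x.2 y.2 (Subtype.coe_ne_coe.2 hne)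
  have hinj := hφ.injOn_neighborSet (v := .inr ⟨b, hb⟩)
    (by rw [ncard_neighborSet_leviGraph_inr (hS.2.1 b hb).1, (hS.2.1 b hb).2]) (Set.toFinite _)
  exact hne (Sum.inl_injective (hinj (by simpa) (by simpa) hxy))

end LeviGraph

theorem steiner_levi_bipartite_girth_rHued_general {α : Type*} {r n : ℕ}
    (V : Finset α) (B : Finset (Finset α)) (hS : IsSteinerSystem r n V B) :
    (leviGraph V B).Colorable 2 ∧ (6 : ℕ∞) ≤ (leviGraph V B).egirth ∧
      n ≤ rHuedChromNum (leviGraph V B) r := by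
  refine ⟨leviGraph_colorable_two V B,
    six_le_egirth (leviGraph_colorable_two V B) hS.commonNeighbors_leviGraph_subsingleton, ?_⟩
  refine le_rHuedChromNum fun k φ hφ => ?_
  simpa [hS.1] using Fintype.card_le_of_injective _ (hS.injective_comp_inl hφ)

/-- If a Steiner system `S(2, r, n)` with `r ≥ 2` exists, then its Levi graph is a
bipartite graph of girth at least `6` whose `r`-hued chromatic number is at least `n`. -/
theorem steiner_levi_bipartite_girth_rHued {α : Type*} {r n : ℕ} (hr : 2 ≤ r)
    (V : Finset α) (B : Finset (Finset α)) (hS : IsSteinerSystem r n V B) :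
    (leviGraph V B).Colorable 2 ∧ (6 : ℕ∞) ≤ (leviGraph V B).egirth ∧
      n ≤ rHuedChromNum (leviGraph V B) r :=
  steiner_levi_bipartite_girth_rHued_general V B hS
end

section
/- Let r ≥ 2 and Δ ≥ r + 2 be integers and suppose a Steiner system S(2, r, (r − 1)Δ + 1) exists. Then its Levi graph G has maximum degree Δ(G) = Δ and χ_r(G) ≤ (r − 1)Δ + 1. -/
open SimpleGraph

/-!
Any two points lie in a common block, so an `r`-hued colouring must colour the points
injectively; use the `#V` colours bijectively on the points and give each block `b` the colour
of a point `p b ∉ b`. It remains to choose `p` so that the blocks through every point take at least `r`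
values. Fix a block `b₀`, a point `z ∉ b₀` and a fixed-point-free permutation `σ` of `b₀`.
Put `p b₀ = z` and let a block meeting `b₀` in `a` take the value `σ a`, except that through
each `a ∈ b₀` we reserve `r - 2` blocks, which receive pairwise distinct points off `b₀ ∪ {z}`
(Hall; there is room since `(r - 1)Δ + 1 ≥ r(r - 2) + 2r + 1`). A point `v ∉ b₀` is joined
to the `r` points of `b₀` by `r` blocks with distinct values; a point `v ∈ b₀` sees `z`, `σ v`
(on an unreserved block, as `Δ - 1 > r - 2`) and its `r - 2` reserved values.
-/

open Finset

theorem Finset.exists_perm_mapsTo_ne {α : Type*} [DecidableEq α] {s : Finset α} (hs : 2 ≤ #s) :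
    ∃ σ : Equiv.Perm α, ∀ a ∈ s, σ a ∈ s ∧ σ a ≠ a := by
  refine ⟨s.toList.formPerm, fun a ha => ?_⟩
  have ha' : a ∈ s.toList := mem_toList.mpr ha
  exact ⟨mem_toList.mp (List.formPerm_apply_mem_of_mem ha'),
    (List.formPerm_apply_mem_ne_self_iff _ s.nodup_toList a ha').mpr (by simpa using hs)⟩

theorem Finset.exists_injOn_mem_of_card_le {ι β : Type*} [DecidableEq β] [Nonempty β]
    {s : Finset ι} {t : ι → Finset β} (h : ∀ i ∈ s, #s ≤ #(t i)) :
    ∃ f : ι → β, Set.InjOn f s ∧ ∀ i ∈ s, f i ∈ t i := by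
  classical
  have hall : ∀ u : Finset s, #u ≤ #(u.biUnion fun i => t i) := by
    intro u
    obtain rfl | ⟨i, hi⟩ := u.eq_empty_or_nonempty
    · simp
    calc #u ≤ #s := by simpa using card_le_univ u
      _ ≤ #(t i) := h i i.2
      _ ≤ #(u.biUnion fun i => t i) := card_le_card (subset_biUnion_of_mem (fun i : s => t i) hi)
  obtain ⟨f, hf, hft⟩ := (all_card_le_biUnion_card_iff_exists_injective _).mp hall
  refine ⟨fun i => if hi : i ∈ s then f ⟨i, hi⟩ else Classical.arbitrary β, ?_, ?_⟩
  · intro i hi j hj hij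
    rw [mem_coe] at hi hj
    simp only [dif_pos hi, dif_pos hj] at hij
    exact congrArg Subtype.val (hf hij)
  · intro i hi
    simpa [hi] using hft ⟨i, hi⟩

theorem Finset.card_add_two_le_card_image {ι β : Type*} [DecidableEq β] {s T : Finset ι}
    {p : ι → β} {i j : ι} (hT : T ⊆ s) (hinj : Set.InjOn p T) (hi : i ∈ s) (hj : j ∈ s)
    (hij : p i ≠ p j) (hTi : ∀ c ∈ T, p c ≠ p i) (hTj : ∀ c ∈ T, p c ≠ p j) :
    #T + 2 ≤ #(s.image p) := by
  have hsub : insert (p i) (insert (p j) (T.image p)) ⊆ s.image p := by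
    refine insert_subset (mem_image_of_mem p hi) (insert_subset (mem_image_of_mem p hj) ?_)
    exact image_subset_image hT
  have hj' : p j ∉ T.image p := by simpa using hTj
  have hi' : p i ∉ insert (p j) (T.image p) := by simpa [hij] using hTi
  calc #T + 2 = #(insert (p i) (insert (p j) (T.image p))) := by
        rw [card_insert_of_notMem hi', card_insert_of_notMem hj', card_image_of_injOn hinj]
    _ ≤ #(s.image p) := card_le_card hsub

theorem Finset.ncard_image_setOf_subtype {α β : Type*} {s : Finset α} (P : α → Prop)
    [DecidablePred P] [DecidableEq β] (f : α → β) :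
    ((fun x : s => f x.1) '' {x | P x.1}).ncard = #((s.filter P).image f) := by
  rw [← Set.ncard_coe_finset]
  congr 1
  ext y
  simp only [Set.mem_image, Set.mem_ofPred_eq, Subtype.exists, exists_and_left, exists_prop,
    coe_image, coe_filter]
  grind

namespace IsSteinerSystem

variable {α : Type*} [DecidableEq α] {r n Δ : ℕ} {V : Finset α} {B : Finset (Finset α)}
  {b₀ : Finset α} {σ : α → α} {R : α → Finset (Finset α)} {p : Finset α → α} {z v : α}

theorem exists_block (hS : IsSteinerSystem r n V B) {u : α} (hu : u ∈ V)
    (hv : v ∈ V) (huv : u ≠ v) : ∃ b ∈ B, u ∈ b ∧ v ∈ b := by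
  obtain ⟨b, ⟨hb, hsub⟩, -⟩ := hS.2.2 {u, v} (by simp [insert_subset_iff, hu, hv])
    (card_pair huv)
  exact ⟨b, hb, hsub (by simp), hsub (by simp)⟩

theorem eq_of_mem_of_mem_of_ne (hS : IsSteinerSystem r n V B)
    {b₁ b₂ : Finset α} {u : α} (hb₁ : b₁ ∈ B) (hb₂ : b₂ ∈ B) (hne : b₁ ≠ b₂) (hu₁ : u ∈ b₁)
    (hu₂ : u ∈ b₂) (hv₁ : v ∈ b₁) (hv₂ : v ∈ b₂) : u = v := by
  by_contra huv
  have hpair : ({u, v} : Finset α) ⊆ V := by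
    simp [insert_subset_iff, (hS.2.1 b₁ hb₁).1 hu₁, (hS.2.1 b₁ hb₁).1 hv₁]
  exact hne <| (hS.2.2 _ hpair (card_pair huv)).unique
    ⟨hb₁, by simp [insert_subset_iff, hu₁, hv₁]⟩ ⟨hb₂, by simp [insert_subset_iff, hu₂, hv₂]⟩

/-- The blocks through `v` partition `V \ {v}` into pieces of size `r - 1`. -/
theorem card_filter_mem_mul (hS : IsSteinerSystem r n V B) (hv : v ∈ V) :
    #(B.filter (v ∈ ·)) * (r - 1) = n - 1 := by
  have hdisj : (B.filter (v ∈ ·) : Set (Finset α)).PairwiseDisjoint (·.erase v) := by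
    intro b₁ h₁ b₂ h₂ hne
    simp only [coe_filter, Set.mem_ofPred_eq] at h₁ h₂
    exact disjoint_left.mpr fun a ha₁ ha₂ => ne_of_mem_erase ha₁ <| hS.eq_of_mem_of_mem_of_ne
      h₁.1 h₂.1 hne (mem_of_mem_erase ha₁) (mem_of_mem_erase ha₂) h₁.2 h₂.2
  have hunion : (B.filter (v ∈ ·)).biUnion (·.erase v) = V.erase v := by
    ext a
    simp only [mem_biUnion, mem_filter, mem_erase]
    constructor
    · rintro ⟨b, ⟨hb, -⟩, hav, hab⟩
      exact ⟨hav, (hS.2.1 b hb).1 hab⟩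
    · rintro ⟨hav, ha⟩
      obtain ⟨b, hb, hvb, hab⟩ := hS.exists_block hv ha (Ne.symm hav)
      exact ⟨b, ⟨hb, hvb⟩, hav, hab⟩
  have hcard := card_biUnion hdisj
  rw [hunion, card_erase_of_mem hv, hS.1] at hcard
  rw [hcard, sum_const_nat]
  intro b hb
  rw [mem_filter] at hb
  rw [card_erase_of_mem hb.2, (hS.2.1 b hb.1).2]

theorem card_filter_mem (hr : 2 ≤ r)
    (hS : IsSteinerSystem r ((r - 1) * Δ + 1) V B) (hv : v ∈ V) :
    #(B.filter (v ∈ ·)) = Δ := by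
  have h := hS.card_filter_mem_mul hv
  rw [Nat.add_sub_cancel, mul_comm] at h
  exact Nat.eq_of_mul_eq_mul_left (by omega) h

theorem exists_block_and_point_notMem (hS : IsSteinerSystem r n V B) (hr : 2 ≤ r) (hn : r < n) :
    ∃ b₀ ∈ B, ∃ z ∈ V, z ∉ b₀ := by
  obtain ⟨u, hu, v, hv, huv⟩ := one_lt_card.mp (by rw [hS.1]; omega : 1 < #V)
  obtain ⟨b₀, hb₀, -⟩ := hS.exists_block hu hv huv
  obtain ⟨z, hzV, hzb₀⟩ := exists_mem_notMem_of_card_lt_card (s := b₀) (t := V)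
    (by rw [(hS.2.1 b₀ hb₀).2, hS.1]; exact hn)
  exact ⟨b₀, hb₀, z, hzV, hzb₀⟩

theorem exists_perm_meet (hS : IsSteinerSystem r n V B) (hb₀ : b₀ ∈ B) (h₀ : b₀.Nonempty)
    (hσ : ∀ a ∈ b₀, σ a ∈ b₀ ∧ σ a ≠ a) :
    ∃ f : Finset α → α, ∀ b ∈ B, b ≠ b₀ → f b ∈ b₀ ∧ f b ∉ b ∧ ∀ a ∈ b₀, a ∈ b → f b = σ a := by
  suffices h : ∀ b ∈ B, b ≠ b₀ → ∃ x ∈ b₀, x ∉ b ∧ ∀ a ∈ b₀, a ∈ b → x = σ a by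
    have : Nonempty α := h₀.to_subtype.map Subtype.val
    choose! f hf₀ hf using h
    exact ⟨f, fun b hb hne => ⟨hf₀ b hb hne, hf b hb hne⟩⟩
  intro b hb hne
  by_cases hmeet : ∃ a ∈ b₀, a ∈ b
  · obtain ⟨a, ha, hab⟩ := hmeet
    refine ⟨σ a, (hσ a ha).1, fun hσb => (hσ a ha).2 ?_, fun a' ha' ha'b => ?_⟩
    · exact hS.eq_of_mem_of_mem_of_ne hb hb₀ hne hσb (hσ a ha).1 hab ha
    · rw [hS.eq_of_mem_of_mem_of_ne hb hb₀ hne ha'b ha' hab ha]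
  · obtain ⟨x, hx⟩ := h₀
    exact ⟨x, hx, fun hxb => hmeet ⟨x, hx, hxb⟩, fun a ha hab => absurd ⟨a, ha, hab⟩ hmeet⟩

theorem card_le_card_image_filter_mem_of_notMem (hS : IsSteinerSystem r n V B)
    {Q : Finset (Finset α)} (hb₀ : b₀ ∈ B) (hσ : ∀ a ∈ b₀, σ a ∈ b₀) (hσinj : Set.InjOn σ b₀)
    (hinj : Set.InjOn p Q)
    (hQb₀ : ∀ c ∈ Q, p c ∉ b₀) (hmeet : ∀ b ∈ B, b ≠ b₀ → b ∉ Q → ∀ a ∈ b₀, a ∈ b → p b = σ a)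
    (hv : v ∈ V) (hvb₀ : v ∉ b₀) : #b₀ ≤ #((B.filter (v ∈ ·)).image p) := by
  have hd : ∀ a ∈ b₀, ∃ d ∈ B, v ∈ d ∧ a ∈ d := fun a ha =>
    hS.exists_block hv ((hS.2.1 b₀ hb₀).1 ha) (ne_of_mem_of_not_mem ha hvb₀).symm
  choose! d hdB hdv hda using hd
  have hdb₀ : ∀ a ∈ b₀, d a ≠ b₀ := fun a ha h => hvb₀ (h ▸ hdv a ha)
  have hpd : ∀ a ∈ b₀, d a ∉ Q → p (d a) = σ a := fun a ha hQ =>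
    hmeet (d a) (hdB a ha) (hdb₀ a ha) hQ a ha (hda a ha)
  have hinjd : Set.InjOn (p ∘ d) b₀ := by
    intro a ha a' ha' h
    simp only [Function.comp_apply] at h
    by_cases hQ₁ : d a ∈ Q <;> by_cases hQ₂ : d a' ∈ Q
    · have hdd : d a = d a' := hinj hQ₁ hQ₂ h
      exact hS.eq_of_mem_of_mem_of_ne (hdB a ha) hb₀ (hdb₀ a ha) (hda a ha) ha
        (hdd ▸ hda a' ha') ha'
    · exact absurd (h ▸ hpd a' ha' hQ₂ ▸ hσ a' ha') (hQb₀ _ hQ₁)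
    · exact absurd (h.symm ▸ hpd a ha hQ₁ ▸ hσ a ha) (hQb₀ _ hQ₂)
    · exact hσinj ha ha' (by rw [← hpd a ha hQ₁, ← hpd a' ha' hQ₂, h])
  calc #b₀ = #(b₀.image (p ∘ d)) := (card_image_of_injOn hinjd).symm
    _ ≤ #((B.filter (v ∈ ·)).image p) := by
      rw [← image_image]
      exact card_le_card (image_subset_image fun _ hc => by
        obtain ⟨a, ha, rfl⟩ := mem_image.mp hc
        exact mem_filter.mpr ⟨hdB a ha, hdv a ha⟩)

theorem exists_reserved_blocks (hr : 2 ≤ r) (hΔ : r + 2 ≤ Δ)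
    (hS : IsSteinerSystem r ((r - 1) * Δ + 1) V B) (hb₀ : b₀ ∈ B) (z : α) :
    ∃ (R : α → Finset (Finset α)) (q : Finset α → α),
      (∀ a ∈ b₀, R a ⊆ (B.filter (a ∈ ·)).erase b₀ ∧ #(R a) = r - 2) ∧
      Set.InjOn q (b₀.biUnion R) ∧ ∀ c ∈ b₀.biUnion R, q c ∈ V ∧ q c ≠ z ∧ q c ∉ c ∧ q c ∉ b₀ := by
  obtain ⟨hb₀V, hb₀r⟩ := hS.2.1 b₀ hb₀
  have hres : ∀ a ∈ b₀, ∃ T ⊆ (B.filter (a ∈ ·)).erase b₀, #T = r - 2 := fun a ha =>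
    exists_subset_card_eq (by
      rw [card_erase_of_mem (mem_filter.mpr ⟨hb₀, ha⟩), hS.card_filter_mem hr (hb₀V ha)]
      omega)
  choose! R hRsub hRcard using hres
  have hRle : #(b₀.biUnion R) ≤ r * (r - 2) :=
    hb₀r ▸ card_biUnion_le_card_mul b₀ R (r - 2) fun a ha => (hRcard a ha).le
  have harith : r * (r - 2) + (2 * r + 1) ≤ (r - 1) * Δ + 1 := by
    obtain ⟨s, rfl⟩ : ∃ s, r = s + 2 := ⟨r - 2, by omega⟩
    rw [show s + 2 - 1 = s + 1 by omega, Nat.add_sub_cancel]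
    nlinarith
  have : Nonempty α := ⟨z⟩
  obtain ⟨q, hq, hqt⟩ := exists_injOn_mem_of_card_le
    (s := b₀.biUnion R) (t := fun c => V \ insert z (c ∪ b₀)) fun c hc => by
      obtain ⟨a, ha, hca⟩ := mem_biUnion.mp hc
      have hcB : c ∈ B := (mem_filter.mp (mem_of_mem_erase (hRsub a ha hca))).1
      have hforbid : #(insert z (c ∪ b₀)) ≤ 2 * r + 1 := by
        have := card_union_le c b₀
        rw [(hS.2.1 c hcB).2, hb₀r] at this
        exact (card_insert_le _ _).trans (by omega)
      have := le_card_sdiff (insert z (c ∪ b₀)) V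
      rw [hS.1] at this
      omega
  exact ⟨R, q, fun a ha => ⟨hRsub a ha, hRcard a ha⟩, hq,
    fun c hc => by simpa [not_or] using hqt c hc⟩

theorem le_card_image_filter_mem_of_mem (hr : 2 ≤ r)
    (hS : IsSteinerSystem r ((r - 1) * Δ + 1) V B) (hΔ : r ≤ Δ) (hb₀ : b₀ ∈ B)
    (hR : ∀ a ∈ b₀, R a ⊆ (B.filter (a ∈ ·)).erase b₀ ∧ #(R a) = r - 2)
    (hpb₀ : p b₀ = z) (hinj : Set.InjOn p (b₀.biUnion R))
    (hpR : ∀ c ∈ b₀.biUnion R, p c ≠ z ∧ p c ∉ b₀)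
    (hpσ : ∀ b ∈ B, b ≠ b₀ → b ∉ b₀.biUnion R → ∀ a ∈ b₀, a ∈ b → p b = σ a)
    (hz : z ∉ b₀) (hv : v ∈ b₀) (hσv : σ v ∈ b₀) : r ≤ #((B.filter (v ∈ ·)).image p) := by
  have hvV : v ∈ V := (hS.2.1 b₀ hb₀).1 hv
  obtain ⟨c', hc', hc'v⟩ := exists_mem_notMem_of_card_lt_card
    (s := R v) (t := (B.filter (v ∈ ·)).erase b₀) (by
      rw [(hR v hv).2, card_erase_of_mem (mem_filter.mpr ⟨hb₀, hv⟩), hS.card_filter_mem hr hvV]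
      omega)
  obtain ⟨hc'b₀, hc'B, hvc'⟩ : c' ≠ b₀ ∧ c' ∈ B ∧ v ∈ c' := by simpa using hc'
  have hc'R : c' ∉ b₀.biUnion R := by
    intro h
    obtain ⟨a, ha, hc'a⟩ := mem_biUnion.mp h
    have hac' : a ∈ c' := (mem_filter.mp (mem_of_mem_erase ((hR a ha).1 hc'a))).2
    rw [hS.eq_of_mem_of_mem_of_ne hc'B hb₀ hc'b₀ hac' ha hvc' hv] at hc'a
    exact hc'v hc'a
  have hpc' : p c' = σ v := hpσ c' hc'B hc'b₀ hc'R v hv hvc'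
  have hRv : R v ⊆ b₀.biUnion R := subset_biUnion_of_mem R hv
  have := card_add_two_le_card_image (i := b₀) (j := c')
    (fun c hc => mem_of_mem_erase ((hR v hv).1 hc)) (hinj.mono hRv)
    (mem_filter.mpr ⟨hb₀, hv⟩) (mem_filter.mpr ⟨hc'B, hvc'⟩)
    (by rw [hpb₀, hpc']; exact fun h => hz (h ▸ hσv))
    (fun c hc => hpb₀ ▸ (hpR c (hRv hc)).1)
    (fun c hc h => (hpR c (hRv hc)).2 (h ▸ hpc' ▸ hσv))
  rw [(hR v hv).2] at this
  omega

theorem exists_hued_representatives (hr : 2 ≤ r) (hΔ : r + 2 ≤ Δ)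
    (hS : IsSteinerSystem r ((r - 1) * Δ + 1) V B) :
    ∃ p : Finset α → α, (∀ b ∈ B, p b ∈ V ∧ p b ∉ b) ∧
      ∀ v ∈ V, r ≤ #((B.filter (v ∈ ·)).image p) := by
  have hn : r < (r - 1) * Δ + 1 := by
    have := Nat.le_mul_of_pos_left Δ (by omega : 0 < r - 1)
    omega
  obtain ⟨b₀, hb₀, z, hzV, hzb₀⟩ := hS.exists_block_and_point_notMem (by omega) hn
  obtain ⟨hb₀V, hb₀r⟩ := hS.2.1 b₀ hb₀
  obtain ⟨σ, hσ⟩ := exists_perm_mapsTo_ne (hb₀r ▸ hr : 2 ≤ #b₀)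
  obtain ⟨f, hf⟩ := hS.exists_perm_meet hb₀ (card_pos.mp (by omega)) hσ
  obtain ⟨R, q, hR, hq, hqR⟩ := hS.exists_reserved_blocks hr hΔ hb₀ z
  have hRb₀ : ∀ c ∈ b₀.biUnion R, c ≠ b₀ := fun c hc => by
    obtain ⟨a, ha, hca⟩ := mem_biUnion.mp hc
    exact ne_of_mem_erase ((hR a ha).1 hca)
  let p b := if b = b₀ then z else if b ∈ b₀.biUnion R then q b else f b
  have hpb₀ : p b₀ = z := if_pos rfl
  have hpR : ∀ c ∈ b₀.biUnion R, p c = q c := fun c hc => by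
    simp only [p, if_neg (hRb₀ c hc), if_pos hc]
  have hpf : ∀ b, b ≠ b₀ → b ∉ b₀.biUnion R → p b = f b := fun b h₀ hb => by
    simp only [p, if_neg h₀, if_neg hb]
  have hinj : Set.InjOn p (b₀.biUnion R) := hq.congr fun c hc => (hpR c hc).symm
  have hpσ : ∀ b ∈ B, b ≠ b₀ → b ∉ b₀.biUnion R → ∀ a ∈ b₀, a ∈ b → p b = σ a :=
    fun b hb h₀ hbR => hpf b h₀ hbR ▸ (hf b hb h₀).2.2
  refine ⟨p, fun b hb => ?_, fun v hv => ?_⟩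
  · by_cases h₀ : b = b₀
    · exact h₀ ▸ hpb₀ ▸ ⟨hzV, hzb₀⟩
    by_cases hbR : b ∈ b₀.biUnion R
    · exact hpR b hbR ▸ ⟨(hqR b hbR).1, (hqR b hbR).2.2.1⟩
    · exact hpf b h₀ hbR ▸ ⟨hb₀V (hf b hb h₀).1, (hf b hb h₀).2.1⟩
  by_cases hvb₀ : v ∈ b₀
  · exact hS.le_card_image_filter_mem_of_mem hr (by omega) hb₀ hR hpb₀ hinj
      (fun c hc => ⟨hpR c hc ▸ (hqR c hc).2.1, hpR c hc ▸ (hqR c hc).2.2.2⟩) hpσ hzb₀ hvb₀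
      (hσ v hvb₀).1
  · exact hb₀r ▸ hS.card_le_card_image_filter_mem_of_notMem hb₀ (fun a ha => (hσ a ha).1)
      σ.injective.injOn hinj
      (fun c hc => hpR c hc ▸ (hqR c hc).2.2.2) hpσ hv hvb₀

end IsSteinerSystem

namespace leviGraph

variable {α : Type*} {V : Finset α} {B : Finset (Finset α)}

theorem adj_inl_inr {x : {x // x ∈ V}} {b : {b // b ∈ B}} :
    (leviGraph V B).Adj (Sum.inl x) (Sum.inr b) ↔ x.1 ∈ b.1 := by
  simp [leviGraph]

theorem neighborSet_inl (x : {x // x ∈ V}) :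
    (leviGraph V B).neighborSet (Sum.inl x) = Sum.inr '' {b | x.1 ∈ b.1} := by
  ext (y | b) <;> simp [leviGraph]

theorem neighborSet_inr (b : {b // b ∈ B}) :
    (leviGraph V B).neighborSet (Sum.inr b) = Sum.inl '' {x | x.1 ∈ b.1} := by
  ext (x | c) <;> simp [leviGraph]

variable [DecidableEq α]

theorem ncard_neighborSet_inl (x : {x // x ∈ V}) :
    ((leviGraph V B).neighborSet (Sum.inl x)).ncard = #(B.filter (x.1 ∈ ·)) := by
  rw [neighborSet_inl, Set.ncard_image_of_injective _ Sum.inr_injective,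
    ← image_id (s := B.filter (x.1 ∈ ·)), ← ncard_image_setOf_subtype]
  exact (Set.ncard_image_of_injective _ Subtype.val_injective).symm

theorem ncard_neighborSet_inr (b : {b // b ∈ B}) :
    ((leviGraph V B).neighborSet (Sum.inr b)).ncard = #(V.filter (· ∈ b.1)) := by
  rw [neighborSet_inr, Set.ncard_image_of_injective _ Sum.inl_injective,
    ← image_id (s := V.filter (· ∈ b.1)), ← ncard_image_setOf_subtype]
  exact (Set.ncard_image_of_injective _ Subtype.val_injective).symm

theorem maxDeg_eq {Δ : ℕ} (hV : V.Nonempty) (hpt : ∀ v ∈ V, #(B.filter (v ∈ ·)) = Δ)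
    (hblk : ∀ b ∈ B, #b ≤ Δ) : maxDeg (leviGraph V B) = Δ := by
  obtain ⟨v, hv⟩ := hV
  refine le_antisymm (Finset.sup_le ?_) ?_
  · rintro (x | b) -
    · rw [ncard_neighborSet_inl, hpt x.1 x.2]
    · rw [ncard_neighborSet_inr]
      exact (card_le_card fun a ha => (mem_filter.mp ha).2).trans (hblk b.1 b.2)
  · calc Δ = ((leviGraph V B).neighborSet (Sum.inl ⟨v, hv⟩)).ncard := by
          rw [ncard_neighborSet_inl, hpt v hv]
      _ ≤ maxDeg (leviGraph V B) :=
          Finset.le_sup (f := fun w => ((leviGraph V B).neighborSet w).ncard) (mem_univ _)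

theorem rHuedChromNum_le_card {r : ℕ} {p : Finset α → α} (hp : ∀ b ∈ B, p b ∈ V ∧ p b ∉ b)
    (hhue : ∀ v ∈ V, min r #(B.filter (v ∈ ·)) ≤ #((B.filter (v ∈ ·)).image p)) :
    rHuedChromNum (leviGraph V B) r ≤ #V := by
  let e := V.equivFin
  let g : {b // b ∈ B} → {x // x ∈ V} := fun b => ⟨p b, (hp b b.2).1⟩
  let φ := Sum.elim e (e ∘ g)
  have hval : Function.Injective (Subtype.val ∘ e.symm) :=
    Subtype.val_injective.comp e.symm.injective
  have hgb : ∀ (x : {x // x ∈ V}) (b : {b // b ∈ B}), x.1 ∈ b.1 → x ≠ g b :=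
    fun x b hx h => (hp b b.2).2 (by subst h; exact hx)
  refine Nat.sInf_le ⟨φ, ?_, ?_⟩
  · rintro (x | b) (y | c) h
    · simp [leviGraph] at h
    · exact e.injective.ne (hgb x c (adj_inl_inr.mp h))
    · exact e.injective.ne (hgb y b (adj_inl_inr.mp h.symm)).symm
    · simp [leviGraph] at h
  · rintro (x | b)
    · have himage : (φ '' (leviGraph V B).neighborSet (Sum.inl x)).ncard =
          #((B.filter (x.1 ∈ ·)).image p) := by
        rw [neighborSet_inl, Set.image_image, ← ncard_image_setOf_subtype,
          ← Set.ncard_image_of_injective _ hval, Set.image_image]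
        simp [φ, g]
      rw [himage, ncard_neighborSet_inl]
      exact hhue x.1 x.2
    · have himage : (φ '' (leviGraph V B).neighborSet (Sum.inr b)).ncard =
          #(V.filter (· ∈ b.1)) := by
        rw [neighborSet_inr, Set.image_image, ← image_id (s := V.filter _),
          ← ncard_image_setOf_subtype, ← Set.ncard_image_of_injective _ hval, Set.image_image]
        simp [φ]
      rw [himage, ncard_neighborSet_inr]
      exact min_le_right _ _

end leviGraph

/-- If `r ≥ 2`, `Δ ≥ r + 2`, and a Steiner system `S(2, r, (r - 1)Δ + 1)` exists, then
its Levi graph `G` satisfies `Δ(G) = Δ` and `χ_r(G) ≤ (r - 1)Δ + 1`. -/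
theorem steiner_levi_maxDeg_and_rHued_le {α : Type*} {r Δ : ℕ} (hr : 2 ≤ r) (hΔ : r + 2 ≤ Δ)
    (V : Finset α) (B : Finset (Finset α)) (hS : IsSteinerSystem r ((r - 1) * Δ + 1) V B) :
    maxDeg (leviGraph V B) = Δ ∧
      rHuedChromNum (leviGraph V B) r ≤ (r - 1) * Δ + 1 := by
  classical
  obtain ⟨p, hp, hhue⟩ := hS.exists_hued_representatives hr hΔ
  refine ⟨leviGraph.maxDeg_eq ?_ (fun v hv => hS.card_filter_mem hr hv) fun b hb => ?_, ?_⟩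
  · exact card_pos.mp (by rw [hS.1]; omega)
  · rw [(hS.2.1 b hb).2]
    omega
  · exact hS.1 ▸ leviGraph.rHuedChromNum_le_card hp fun v hv =>
      (min_le_left _ _).trans (hhue v hv)
end

section
/- Let r ≥ 2 and Δ ≥ r + 2 be integers and suppose a Steiner system S(2, r, (r − 1)Δ + 1) exists. Then there is a bipartite finite simple graph G (namely the Levi graph of the Steiner system) with maximum degree Δ(G) = Δ and χ_r(G) = (r − 1)Δ + 1. -/
open SimpleGraph

/-! ### Auxiliary lemmas -/

open Finset in
/-- Greedy coloring of the blocks: if there are more than `r²` colors available, we can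
color the blocks so that each block avoids the colors of its points and each point sees
at least `min r (number of its blocks)` colors on its blocks. -/
lemma greedy_exists {α : Type*} [DecidableEq α] {n r : ℕ} (hr : 1 ≤ r) (hrn : r * r < n)
    (pcol : α → Fin n) :
    ∀ S : Finset (Finset α), (∀ b ∈ S, b.card = r) →
      ∃ f : Finset α → Fin n, (∀ b ∈ S, f b ∉ b.image pcol) ∧
        ∀ v : α, min r ((S.filter (v ∈ ·)).card) ≤ ((S.filter (v ∈ ·)).image f).card := by
  have hn0 : 0 < n := lt_of_le_of_lt (Nat.zero_le _) hrn
  intro S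
  induction S using Finset.induction_on with
  | empty =>
      intro _
      exact ⟨fun _ => ⟨0, hn0⟩, by simp, by simp⟩
  | @insert b S hbS ih =>
      intro hcard
      obtain ⟨f, hf1, hf2⟩ := ih (fun b hb => hcard b (Finset.mem_insert_of_mem hb))
      have hbcard : b.card = r := hcard b (Finset.mem_insert_self _ _)
      set Danger : Finset (Fin n) :=
        (b.image pcol) ∪ b.biUnion (fun v =>
          if ((S.filter (v ∈ ·)).image f).card < r then (S.filter (v ∈ ·)).image f else ∅)
        with hDanger
      have hD : Danger.card < n := by
        have h1 : (b.image pcol).card ≤ r := hbcard ▸ Finset.card_image_le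
        have h2 : (b.biUnion (fun v =>
            if ((S.filter (v ∈ ·)).image f).card < r then (S.filter (v ∈ ·)).image f else ∅)).card
            ≤ r * (r - 1) := by
          refine le_trans Finset.card_biUnion_le ?_
          calc ∑ v ∈ b, (if ((S.filter (v ∈ ·)).image f).card < r
                then (S.filter (v ∈ ·)).image f else ∅).card
              ≤ ∑ v ∈ b, (r - 1) := by
                refine Finset.sum_le_sum fun v _ => ?_
                split
                · omega
                · simp
            _ = r * (r - 1) := by rw [Finset.sum_const, hbcard, smul_eq_mul]
        calc Danger.card ≤ (b.image pcol).card + _ := Finset.card_union_le _ _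
          _ ≤ r + r * (r - 1) := by exact Nat.add_le_add h1 h2
          _ ≤ r * r := by nlinarith [Nat.sub_le r 1, Nat.sub_add_cancel hr]
          _ < n := hrn
      obtain ⟨c, hc⟩ : ∃ c : Fin n, c ∉ Danger := by
        by_contra h
        push_neg at h
        have : (Finset.univ : Finset (Fin n)) ⊆ Danger := fun c _ => h c
        have := Finset.card_le_card this
        simp [Finset.card_univ] at this
        omega
      refine ⟨Function.update f b c, ?_, ?_⟩
      · intro b' hb'
        rcases Finset.mem_insert.1 hb' with rfl | hbmem
        · rw [Function.update_self]
          intro hmem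
          exact hc (Finset.mem_union_left _ hmem)
        · have hbne : b' ≠ b := by rintro rfl; exact hbS hbmem
          rw [Function.update_of_ne hbne]
          exact hf1 b' hbmem
      · intro v
        by_cases hv : v ∈ b
        · rw [Finset.filter_insert, if_pos hv]
          have hbnot : b ∉ S.filter (v ∈ ·) := fun h => hbS (Finset.mem_filter.1 h).1
          have himg : ((S.filter (v ∈ ·)).image (Function.update f b c))
              = (S.filter (v ∈ ·)).image f := by
            apply Finset.image_congr
            intro x hx
            have hxne : x ≠ b := by rintro rfl; exact hbnot hx
            exact Function.update_of_ne hxne _ _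
          rw [Finset.image_insert, Function.update_self, himg,
            Finset.card_insert_of_notMem hbnot]
          by_cases hlt : ((S.filter (v ∈ ·)).image f).card < r
          · have hcnot : c ∉ (S.filter (v ∈ ·)).image f := by
              intro hmem
              refine hc (Finset.mem_union_right _ ?_)
              exact Finset.mem_biUnion.2 ⟨v, hv, by rw [if_pos hlt]; exact hmem⟩
            rw [Finset.card_insert_of_notMem hcnot]
            have := hf2 v
            omega
          · push_neg at hlt
            have : ((insert c ((S.filter (v ∈ ·)).image f)).card) ≥ r :=
              le_trans hlt (Finset.card_le_card (Finset.subset_insert _ _))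
            omega
        · rw [Finset.filter_insert, if_neg hv]
          have himg : ((S.filter (v ∈ ·)).image (Function.update f b c))
              = (S.filter (v ∈ ·)).image f := by
            apply Finset.image_congr
            intro x hx
            have hxne : x ≠ b := by rintro rfl; exact hbS (Finset.mem_filter.1 hx).1
            exact Function.update_of_ne hxne _ _
          rw [himg]
          exact hf2 v

/-- Any two distinct points of a Steiner system lie in a unique common block. -/
lemma steiner_pair {α : Type*} [DecidableEq α] {r n : ℕ} {V : Finset α}
    {B : Finset (Finset α)}
    (hS : IsSteinerSystem r n V B) {x y : α} (hx : x ∈ V) (hy : y ∈ V) (hxy : x ≠ y) :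
    ∃! b, b ∈ B ∧ x ∈ b ∧ y ∈ b := by
  obtain ⟨b, ⟨hbB, hsub⟩, huniq⟩ := hS.2.2 {x, y}
    (by rw [Finset.insert_subset_iff, Finset.singleton_subset_iff]; exact ⟨hx, hy⟩)
    (Finset.card_pair hxy)
  refine ⟨b, ⟨hbB, ?_, ?_⟩, ?_⟩
  · exact hsub (Finset.mem_insert_self _ _)
  · exact hsub (Finset.mem_insert_of_mem (Finset.mem_singleton_self _))
  · rintro c ⟨hcB, hxc, hyc⟩
    refine huniq c ⟨hcB, ?_⟩
    rw [Finset.insert_subset_iff, Finset.singleton_subset_iff]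
    exact ⟨hxc, hyc⟩

/-- In a Steiner system `S(2, r, (r-1)Δ + 1)` every point lies in exactly `Δ` blocks. -/
lemma steiner_deg {α : Type*} [DecidableEq α] {r Δ : ℕ} (hr : 2 ≤ r)
    {V : Finset α} {B : Finset (Finset α)}
    (hS : IsSteinerSystem r ((r - 1) * Δ + 1) V B) {x : α} (hx : x ∈ V) :
    (B.filter (x ∈ ·)).card = Δ := by
  have hunion : (B.filter (x ∈ ·)).biUnion (fun b => b.erase x) = V.erase x := by
    ext w
    simp only [Finset.mem_biUnion, Finset.mem_filter, Finset.mem_erase]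
    constructor
    · rintro ⟨b, ⟨hbB, hxb⟩, hwx, hwb⟩
      exact ⟨hwx, (hS.2.1 b hbB).1 hwb⟩
    · rintro ⟨hwx, hwV⟩
      obtain ⟨b, ⟨hbB, hxb, hwb⟩, -⟩ := steiner_pair hS hx hwV (Ne.symm hwx)
      exact ⟨b, ⟨hbB, hxb⟩, hwx, hwb⟩
  have hdisj : ∀ b1 ∈ B.filter (x ∈ ·), ∀ b2 ∈ B.filter (x ∈ ·), b1 ≠ b2 →
      Disjoint (b1.erase x) (b2.erase x) := by
    intro b1 hb1 b2 hb2 hne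
    rw [Finset.mem_filter] at hb1 hb2
    rw [Finset.disjoint_left]
    intro w hw1 hw2
    rw [Finset.mem_erase] at hw1 hw2
    obtain ⟨b, -, huniq⟩ := steiner_pair hS hx ((hS.2.1 b1 hb1.1).1 hw1.2) (Ne.symm hw1.1)
    exact hne ((huniq b1 ⟨hb1.1, hb1.2, hw1.2⟩).trans (huniq b2 ⟨hb2.1, hb2.2, hw2.2⟩).symm)
  have hcount : (V.erase x).card = (B.filter (x ∈ ·)).card * (r - 1) := by
    rw [← hunion, Finset.card_biUnion hdisj]
    rw [Finset.sum_congr rfl (fun b hb => ?_), Finset.sum_const, smul_eq_mul]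
    rw [Finset.mem_filter] at hb
    rw [Finset.card_erase_of_mem hb.2, (hS.2.1 b hb.1).2]
  have hV : (V.erase x).card = (r - 1) * Δ := by
    rw [Finset.card_erase_of_mem hx, hS.1]
    omega
  have hr1 : 0 < r - 1 := by omega
  have : (B.filter (x ∈ ·)).card * (r - 1) = Δ * (r - 1) := by
    rw [← hcount, hV, Nat.mul_comm]
  exact Nat.eq_of_mul_eq_mul_right hr1 this

/-- Description of the neighborhood of a point in the Levi graph. -/
lemma levi_point_nbhd {α : Type*} [DecidableEq α] (V : Finset α) (B : Finset (Finset α))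
    (x : {x // x ∈ V}) {k : ℕ} (φ : ({x // x ∈ V} ⊕ {b // b ∈ B}) → Fin k)
    (g : Finset α → Fin k) (hg : ∀ b : {b // b ∈ B}, φ (Sum.inr b) = g ↑b) :
    ((leviGraph V B).neighborSet (Sum.inl x)).ncard = (B.filter ((x:α) ∈ ·)).card ∧
    (φ '' (leviGraph V B).neighborSet (Sum.inl x)).ncard
      = ((B.filter ((x:α) ∈ ·)).image g).card := by
  have hN : (leviGraph V B).neighborSet (Sum.inl x) =
      Sum.inr '' {b : {b // b ∈ B} | (x:α) ∈ (b:Finset α)} := by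
    ext w
    cases w with
    | inl y => simp [leviGraph]
    | inr b => simp [leviGraph]
  have hvS : Subtype.val '' {b : {b // b ∈ B} | (x:α) ∈ (b:Finset α)}
      = ↑(B.filter ((x:α) ∈ ·)) := by
    ext c
    simp only [Set.mem_image, Set.mem_setOf_eq, Subtype.exists, exists_and_left,
      Finset.coe_filter, Finset.mem_coe, Finset.mem_filter]
    constructor
    · rintro ⟨b, hxb, hb, rfl⟩; exact ⟨hb, hxb⟩
    · rintro ⟨hc, hxc⟩; exact ⟨c, hxc, hc, rfl⟩
  constructor
  · rw [hN, Set.ncard_image_of_injective _ Sum.inr_injective,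
      ← Set.ncard_image_of_injective _ Subtype.val_injective, hvS, Set.ncard_coe_finset]
  · rw [hN, Set.image_image]
    have h1 : (fun b : {b // b ∈ B} => φ (Sum.inr b))
        = fun b : {b // b ∈ B} => g ↑b := funext hg
    rw [h1, ← Set.image_image g Subtype.val, hvS, ← Finset.coe_image, Set.ncard_coe_finset]

/-- Description of the neighborhood of a block in the Levi graph. -/
lemma levi_block_nbhd {α : Type*} [DecidableEq α] (V : Finset α) (B : Finset (Finset α))
    (b : {b // b ∈ B}) (hsub : (b : Finset α) ⊆ V) {k : ℕ}
    (φ : ({x // x ∈ V} ⊕ {b // b ∈ B}) → Fin k)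
    (p : α → Fin k) (hp : ∀ x : {x // x ∈ V}, φ (Sum.inl x) = p ↑x) :
    ((leviGraph V B).neighborSet (Sum.inr b)).ncard = (b : Finset α).card ∧
    (φ '' (leviGraph V B).neighborSet (Sum.inr b)).ncard
      = ((b : Finset α).image p).card := by
  have hN : (leviGraph V B).neighborSet (Sum.inr b) =
      Sum.inl '' {x : {x // x ∈ V} | (x:α) ∈ (b:Finset α)} := by
    ext w
    cases w with
    | inl y => simp [leviGraph]
    | inr c => simp [leviGraph]
  have hvS : Subtype.val '' {x : {x // x ∈ V} | (x:α) ∈ (b:Finset α)}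
      = ↑(b : Finset α) := by
    ext a
    simp only [Set.mem_image, Set.mem_setOf_eq, Subtype.exists, exists_and_left,
      Finset.mem_coe]
    constructor
    · rintro ⟨c, hc, hcV, rfl⟩; exact hc
    · intro ha; exact ⟨a, ha, hsub ha, rfl⟩
  constructor
  · rw [hN, Set.ncard_image_of_injective _ Sum.inl_injective,
      ← Set.ncard_image_of_injective _ Subtype.val_injective, hvS, Set.ncard_coe_finset]
  · rw [hN, Set.image_image]
    have h1 : (fun x : {x // x ∈ V} => φ (Sum.inl x))
        = fun x : {x // x ∈ V} => p ↑x := funext hp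
    rw [h1, ← Set.image_image p Subtype.val, hvS, ← Finset.coe_image, Set.ncard_coe_finset]

/-- If `r ≥ 2`, `Δ ≥ r + 2`, and a Steiner system `S(2, r, (r - 1)Δ + 1)` exists, then
its Levi graph is a bipartite graph `G` with `Δ(G) = Δ` and `χ_r(G) = (r - 1)Δ + 1`. -/
theorem steiner_levi_rHued_eq {α : Type*} {r Δ : ℕ} (hr : 2 ≤ r) (hΔ : r + 2 ≤ Δ)
    (V : Finset α) (B : Finset (Finset α)) (hS : IsSteinerSystem r ((r - 1) * Δ + 1) V B) :
    (leviGraph V B).Colorable 2 ∧ maxDeg (leviGraph V B) = Δ ∧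
      rHuedChromNum (leviGraph V B) r = (r - 1) * Δ + 1 := by
  classical
  have hVcard : V.card = (r - 1) * Δ + 1 := hS.1
  have hblocks := hS.2.1
  have hΔr : r ≤ Δ := by omega
  have hrn : r * r < (r - 1) * Δ + 1 := by
    have h2 : r * r ≤ (r - 1) * (r + 2) := by
      obtain ⟨s, rfl⟩ : ∃ s, r = s + 2 := ⟨r - 2, by omega⟩
      have hsub : s + 2 - 1 = s + 1 := rfl
      rw [hsub]
      nlinarith
    have h1 : (r - 1) * (r + 2) ≤ (r - 1) * Δ := Nat.mul_le_mul_left _ hΔ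
    omega
  have hVne : V.Nonempty := Finset.card_pos.1 (by rw [hVcard]; omega)
  obtain ⟨x0, hx0⟩ := hVne
  refine ⟨?_, ?_, ?_⟩
  · -- Bipartite: 2-colorable
    refine ⟨SimpleGraph.Coloring.mk (Sum.elim (fun _ => 0) (fun _ => 1)) ?_⟩
    intro u v huv
    cases u with
    | inl x =>
        cases v with
        | inl y => simp [leviGraph] at huv
        | inr b => simp
    | inr b =>
        cases v with
        | inl y => simp
        | inr c => simp [leviGraph] at huv
  · -- Maximum degree
    have hdegpt : ∀ x : {x // x ∈ V},
        ((leviGraph V B).neighborSet (Sum.inl x)).ncard = Δ := by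
      intro x
      have h := (levi_point_nbhd V B x (fun _ => (0 : Fin 1)) (fun _ => 0) (fun _ => rfl)).1
      rw [h, steiner_deg hr hS x.2]
    have hdegbl : ∀ b : {b // b ∈ B},
        ((leviGraph V B).neighborSet (Sum.inr b)).ncard = r := by
      intro b
      have h := (levi_block_nbhd V B b (hblocks ↑b b.2).1 (fun _ => (0 : Fin 1))
        (fun _ => 0) (fun _ => rfl)).1
      rw [h, (hblocks ↑b b.2).2]
    unfold maxDeg
    apply le_antisymm
    · apply Finset.sup_le
      intro v _
      cases v with
      | inl x => rw [hdegpt]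
      | inr b => rw [hdegbl]; omega
    · calc Δ = ((leviGraph V B).neighborSet
            ((Sum.inl ⟨x0, hx0⟩ : {x // x ∈ V} ⊕ {b // b ∈ B}))).ncard := (hdegpt _).symm
        _ ≤ Finset.univ.sup (fun v => ((leviGraph V B).neighborSet v).ncard) :=
          Finset.le_sup (f := fun v => ((leviGraph V B).neighborSet v).ncard)
            (Finset.mem_univ _)
  · -- r-hued chromatic number
    have hlow : ∀ k ∈ {k | ∃ φ : ({x // x ∈ V} ⊕ {b // b ∈ B}) → Fin k,
        IsRHuedColoring (leviGraph V B) r k φ}, (r - 1) * Δ + 1 ≤ k := by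
      intro k hk
      obtain ⟨φ, hproper, hhue⟩ := hk
      set p : α → Fin k :=
        fun a => if h : a ∈ V then φ (Sum.inl ⟨a, h⟩) else φ (Sum.inl ⟨x0, hx0⟩) with hpdef
      have hpx : ∀ x : {x // x ∈ V}, φ (Sum.inl x) = p ↑x := by
        intro x
        rw [hpdef]
        simp only
        rw [dif_pos x.2]
      have hinj : ∀ b ∈ B, Set.InjOn p ↑b := by
        intro b hb
        have hkey := levi_block_nbhd V B ⟨b, hb⟩ (hblocks b hb).1 φ p hpx
        have hhb := hhue (Sum.inr ⟨b, hb⟩)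
        rw [hkey.1, hkey.2] at hhb
        have hhb2 : min r b.card ≤ (b.image p).card := hhb
        have hcb : b.card = r := (hblocks b hb).2
        have hle : (b.image p).card ≤ b.card := Finset.card_image_le
        have heq : (b.image p).card = b.card := by
          rw [hcb, min_self] at hhb2
          omega
        exact Finset.card_image_iff.1 heq
      have hginj : Function.Injective (fun x : {x // x ∈ V} => p ↑x) := by
        intro x y hxy
        by_contra hne
        have hvne : (x : α) ≠ (y : α) := fun h => hne (Subtype.ext h)
        obtain ⟨b, ⟨hbB, hxb, hyb⟩, -⟩ := steiner_pair hS x.2 y.2 hvne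
        exact hvne (hinj b hbB hxb hyb hxy)
      have hcard := Fintype.card_le_of_injective _ hginj
      rwa [Fintype.card_coe, Fintype.card_fin, hVcard] at hcard
    have hmem : ((r - 1) * Δ + 1) ∈ {k | ∃ φ : ({x // x ∈ V} ⊕ {b // b ∈ B}) → Fin k,
        IsRHuedColoring (leviGraph V B) r k φ} := by
      have eqv : {x // x ∈ V} ≃ Fin ((r - 1) * Δ + 1) :=
        V.equivFin.trans (finCongr hVcard)
      set p : α → Fin ((r - 1) * Δ + 1) :=
        fun a => if h : a ∈ V then eqv ⟨a, h⟩ else eqv ⟨x0, hx0⟩ with hpdef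
      obtain ⟨f, hf1, hf2⟩ := greedy_exists (by omega) hrn p B (fun b hb => (hblocks b hb).2)
      set φ : ({x // x ∈ V} ⊕ {b // b ∈ B}) → Fin ((r - 1) * Δ + 1) :=
        Sum.elim (fun x => p ↑x) (fun b => f ↑b) with hφdef
      refine ⟨φ, ?_, ?_⟩
      · -- properness
        intro u v huv
        cases u with
        | inl x =>
            cases v with
            | inl y => simp [leviGraph] at huv
            | inr b =>
                simp only [leviGraph, SimpleGraph.fromRel_adj] at huv
                have hxb : (x : α) ∈ (b : Finset α) := by tauto
                show p ↑x ≠ f ↑b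
                intro heq
                exact hf1 ↑b b.2 (heq ▸ Finset.mem_image_of_mem p hxb)
        | inr b =>
            cases v with
            | inl x =>
                simp only [leviGraph, SimpleGraph.fromRel_adj] at huv
                have hxb : (x : α) ∈ (b : Finset α) := by tauto
                show f ↑b ≠ p ↑x
                intro heq
                exact hf1 ↑b b.2 (heq ▸ Finset.mem_image_of_mem p hxb)
            | inr c => simp [leviGraph] at huv
      · -- hue condition
        intro v
        cases v with
        | inl x =>
            have hkey := levi_point_nbhd V B x φ f (fun b => rfl)
            rw [hkey.1, hkey.2, steiner_deg hr hS x.2]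
            have h2 := hf2 ↑x
            rw [steiner_deg hr hS x.2] at h2
            exact h2
        | inr b =>
            have hkey := levi_block_nbhd V B b (hblocks ↑b b.2).1 φ p (fun x => rfl)
            rw [hkey.1, hkey.2]
            have hpinj : Set.InjOn p ↑(b : Finset α) := by
              intro a1 h1 a2 h2 he
              have h1V : a1 ∈ V := (hblocks ↑b b.2).1 h1
              have h2V : a2 ∈ V := (hblocks ↑b b.2).1 h2
              rw [hpdef] at he
              simp only at he
              rw [dif_pos h1V, dif_pos h2V] at he
              have := eqv.injective he
              exact congrArg Subtype.val this
            rw [Finset.card_image_of_injOn hpinj]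
            exact min_le_right _ _
    unfold rHuedChromNum
    exact le_antisymm (Nat.sInf_le hmem) (le_csInf ⟨_, hmem⟩ hlow)
end

section
/- For every integer Δ ≥ 4, there exists a bipartite finite simple graph G with maximum degree Δ(G) = Δ and χ_2(G) = Δ + 1; for example, the Levi graph of the Steiner system S(2, 2, Δ + 1) whose blocks are all 2-element subsets of a (Δ + 1)-element set (equivalently, the full subdivision of the complete graph K_{Δ+1}) has this property. -/
open SimpleGraph

namespace LeviAux

variable {n : ℕ}

abbrev LG (n : ℕ) := leviGraph (Finset.univ : Finset (Fin n)) (Finset.univ.powersetCard 2)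

abbrev Pts (n : ℕ) := {x // x ∈ (Finset.univ : Finset (Fin n))}
abbrev Blk (n : ℕ) := {b // b ∈ (Finset.univ.powersetCard 2 : Finset (Finset (Fin n)))}

lemma adj_inl_inr (x : Pts n) (b : Blk n) :
    (LG n).Adj (Sum.inl x) (Sum.inr b) ↔ (x : Fin n) ∈ (b : Finset (Fin n)) := by
  simp [LG, leviGraph, SimpleGraph.fromRel_adj]

lemma mem_blocks {s : Finset (Fin n)} (h : s.card = 2) :
    s ∈ (Finset.univ.powersetCard 2 : Finset (Finset (Fin n))) :=
  Finset.mem_powersetCard.mpr ⟨Finset.subset_univ _, h⟩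

lemma blk_card (b : Blk n) : (b : Finset (Fin n)).card = 2 :=
  (Finset.mem_powersetCard.mp b.2).2

lemma deg_inl (x : Pts n) :
    ((LG n).neighborSet (Sum.inl x)).ncard = n - 1 := by
  have key : ∀ w ∈ (LG n).neighborSet (Sum.inl x),
      ∃ b, w = Sum.inr b ∧ (x:Fin n) ∈ (b:Finset (Fin n)) := by
    rintro (y | b) hw
    · simp [LG, leviGraph, SimpleGraph.fromRel_adj, SimpleGraph.mem_neighborSet] at hw
    · exact ⟨b, rfl, (adj_inl_inr x b).mp hw⟩
  have e : {y : Fin n // y ≠ (x:Fin n)} ≃ ((LG n).neighborSet (Sum.inl x)) := by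
    refine Equiv.ofBijective (fun y => ⟨Sum.inr ⟨{(x:Fin n), (y:Fin n)}, ?_⟩, ?_⟩) ⟨?_, ?_⟩
    · rw [Finset.mem_powersetCard]
      exact ⟨Finset.subset_univ _, Finset.card_pair (Ne.symm y.2)⟩
    · rw [SimpleGraph.mem_neighborSet, adj_inl_inr]
      exact Finset.mem_insert_self _ _
    · rintro ⟨a, ha⟩ ⟨c, hc⟩ h
      simp only [Subtype.mk.injEq, Sum.inr.injEq] at h
      have : c ∈ ({(x:Fin n), a} : Finset (Fin n)) := by
        rw [h]; exact Finset.mem_insert_of_mem (Finset.mem_singleton_self _)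
      rcases Finset.mem_insert.mp this with h1 | h1
      · exact absurd h1 hc
      · exact Subtype.ext (Finset.mem_singleton.mp h1).symm
    · rintro ⟨w, hw⟩
      obtain ⟨b, rfl, hxb⟩ := key w hw
      obtain ⟨a, c, hac, hbac⟩ := Finset.card_eq_two.mp (blk_card b)
      rw [hbac] at hxb
      rcases Finset.mem_insert.mp hxb with h1 | h1
      · refine ⟨⟨c, by rw [← h1] at hac; exact hac.symm⟩, ?_⟩
        apply Subtype.ext
        simp only [Sum.inr.injEq]
        apply Subtype.ext
        simp only
        rw [hbac, ← h1]
      · rw [Finset.mem_singleton] at h1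
        refine ⟨⟨a, by rw [← h1] at hac; exact hac⟩, ?_⟩
        apply Subtype.ext
        simp only [Sum.inr.injEq]
        apply Subtype.ext
        simp only
        rw [hbac, ← h1, Finset.pair_comm]
  rw [← Nat.card_coe_set_eq, ← Nat.card_congr e, Nat.card_eq_fintype_card]
  simp [Fintype.card_subtype_compl]

lemma deg_inr (b : Blk n) :
    ((LG n).neighborSet (Sum.inr b)).ncard = 2 := by
  have e : {y : Fin n // y ∈ (b:Finset (Fin n))} ≃ ((LG n).neighborSet (Sum.inr b)) := by
    refine Equiv.ofBijective (fun y => ⟨Sum.inl ⟨(y:Fin n), Finset.mem_univ _⟩, ?_⟩) ⟨?_, ?_⟩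
    · rw [SimpleGraph.mem_neighborSet]
      exact ((LG n).adj_symm ((adj_inl_inr ⟨(y:Fin n), Finset.mem_univ _⟩ b).mpr y.2))
    · rintro ⟨a, ha⟩ ⟨c, hc⟩ h
      simp only [Subtype.mk.injEq, Sum.inl.injEq] at h
      exact Subtype.ext h
    · rintro ⟨w, hw⟩
      rcases w with y | b'
      · refine ⟨⟨(y:Fin n), ?_⟩, ?_⟩
        · rw [SimpleGraph.mem_neighborSet] at hw
          exact (adj_inl_inr y b).mp ((LG n).adj_symm hw)
        · apply Subtype.ext; simp
      · rw [SimpleGraph.mem_neighborSet] at hw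
        simp [LG, leviGraph, SimpleGraph.fromRel_adj] at hw
  rw [← Nat.card_coe_set_eq, ← Nat.card_congr e, Nat.card_eq_fintype_card]
  rw [Fintype.card_coe]
  exact blk_card b

lemma lower (k : ℕ) (hk : k < n) :
    ¬ ∃ φ : _ → Fin k, IsRHuedColoring (LG n) 2 k φ := by
  rintro ⟨φ, hproper, hhued⟩
  obtain ⟨u, v, huv, hfe⟩ := Fintype.exists_ne_map_eq_of_card_lt
    (fun x : Fin n => φ (Sum.inl ⟨x, Finset.mem_univ _⟩)) (by simpa using hk)
  set b : Blk n := ⟨{u, v}, mem_blocks (Finset.card_pair huv)⟩ with hb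
  have hdeg : ((LG n).neighborSet (Sum.inr b)).ncard = 2 := deg_inr b
  have himg : φ '' ((LG n).neighborSet (Sum.inr b)) ⊆
      {φ (Sum.inl ⟨u, Finset.mem_univ _⟩)} := by
    rintro c ⟨w, hw, rfl⟩
    rcases w with y | b'
    · have hy : (y : Fin n) ∈ ({u, v} : Finset (Fin n)) :=
        (adj_inl_inr y b).mp ((LG n).adj_symm hw)
      rcases Finset.mem_insert.mp hy with h1 | h1
      · have hyy : y = ⟨u, Finset.mem_univ _⟩ := Subtype.ext h1
        rw [hyy]; rfl
      · have hyy : y = ⟨v, Finset.mem_univ _⟩ := Subtype.ext (Finset.mem_singleton.mp h1)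
        rw [hyy]
        exact Set.mem_singleton_iff.mpr hfe.symm
    · rw [SimpleGraph.mem_neighborSet] at hw
      simp [LG, leviGraph, SimpleGraph.fromRel_adj] at hw
  have := hhued (Sum.inr b)
  rw [hdeg] at this
  have hle : (φ '' ((LG n).neighborSet (Sum.inr b))).ncard ≤ 1 := by
    calc (φ '' ((LG n).neighborSet (Sum.inr b))).ncard
        ≤ ({φ (Sum.inl ⟨u, Finset.mem_univ _⟩)} : Set (Fin k)).ncard :=
          Set.ncard_le_ncard himg (Set.finite_singleton _)
      _ = 1 := Set.ncard_singleton _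
  omega

def gcol (n : ℕ) (hn : 5 ≤ n) (s : Finset (Fin n)) : Fin n :=
  if (⟨0, by omega⟩ : Fin n) ∈ s then
    (if (⟨1, by omega⟩ : Fin n) ∈ s then ⟨2, by omega⟩ else ⟨1, by omega⟩)
  else ⟨0, by omega⟩

lemma gcol_notMem (hn : 5 ≤ n) {s : Finset (Fin n)} (h : s.card = 2) :
    gcol n hn s ∉ s := by
  unfold gcol
  split_ifs with h0 h1
  · have hs : s = {(⟨0, by omega⟩ : Fin n), ⟨1, by omega⟩} := by
      apply (Finset.eq_of_subset_of_card_le _ _).symm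
      · intro a ha
        rcases Finset.mem_insert.mp ha with h' | h'
        · rw [h']; exact h0
        · rw [Finset.mem_singleton.mp h']; exact h1
      · rw [h, Finset.card_pair]; intro hc; simp [Fin.ext_iff] at hc
    rw [hs]
    intro hc
    rcases Finset.mem_insert.mp hc with h' | h' <;> simp [Fin.ext_iff] at h'
  · exact h1
  · exact h0

def phi (hn : 5 ≤ n) : Pts n ⊕ Blk n → Fin n
  | Sum.inl x => x
  | Sum.inr b => gcol n hn b

lemma upper (hn : 5 ≤ n) :
    ∃ φ : Pts n ⊕ Blk n → Fin n, IsRHuedColoring (LG n) 2 n φ := by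
  have h01 : (⟨0, by omega⟩ : Fin n) ≠ ⟨1, by omega⟩ := by simp [Fin.ext_iff]
  have h02 : (⟨0, by omega⟩ : Fin n) ≠ ⟨2, by omega⟩ := by simp [Fin.ext_iff]
  have h12 : (⟨1, by omega⟩ : Fin n) ≠ ⟨2, by omega⟩ := by simp [Fin.ext_iff]
  refine ⟨phi hn, ?_, ?_⟩
  · rintro (x | b) (y | c) h
    · exact absurd h (by simp [LG, leviGraph, SimpleGraph.fromRel_adj])
    · have hx : (x : Fin n) ∈ (c : Finset (Fin n)) := (adj_inl_inr x c).mp h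
      simp only [phi]
      intro he
      exact gcol_notMem hn (blk_card c) (he ▸ hx)
    · have hy : (y : Fin n) ∈ (b : Finset (Fin n)) :=
        (adj_inl_inr y b).mp ((LG n).adj_symm h)
      simp only [phi]
      intro he
      exact gcol_notMem hn (blk_card b) (he.symm ▸ hy)
    · exact absurd h (by simp [LG, leviGraph, SimpleGraph.fromRel_adj])
  · rintro (x | b)
    · refine le_trans (min_le_left _ _) ?_
      have key : ∃ p q : Finset (Fin n), p.card = 2 ∧ q.card = 2 ∧
          (x : Fin n) ∈ p ∧ (x : Fin n) ∈ q ∧ gcol n hn p ≠ gcol n hn q := by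
        by_cases hx0 : (x : Fin n) = ⟨0, by omega⟩
        · refine ⟨{⟨0, by omega⟩, ⟨1, by omega⟩}, {⟨0, by omega⟩, ⟨2, by omega⟩},
            Finset.card_pair h01, Finset.card_pair h02,
            by simp [hx0], by simp [hx0], ?_⟩
          have e1 : gcol n hn {(⟨0, by omega⟩ : Fin n), ⟨1, by omega⟩} = ⟨2, by omega⟩ := by
            simp [gcol]
          have e2 : gcol n hn {(⟨0, by omega⟩ : Fin n), ⟨2, by omega⟩} = ⟨1, by omega⟩ := by
            simp [gcol, h12, Ne.symm h12, h01, Ne.symm h01]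
          rw [e1, e2]; exact Ne.symm h12
        · by_cases hx1 : (x : Fin n) = ⟨1, by omega⟩
          · refine ⟨{⟨0, by omega⟩, ⟨1, by omega⟩}, {⟨1, by omega⟩, ⟨2, by omega⟩},
              Finset.card_pair h01, Finset.card_pair h12,
              by simp [hx1], by simp [hx1], ?_⟩
            have e1 : gcol n hn {(⟨0, by omega⟩ : Fin n), ⟨1, by omega⟩} = ⟨2, by omega⟩ := by
              simp [gcol]
            have e2 : gcol n hn {(⟨1, by omega⟩ : Fin n), ⟨2, by omega⟩} = ⟨0, by omega⟩ := by
              simp [gcol, h01, h02]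
            rw [e1, e2]; exact Ne.symm h02
          · refine ⟨{(x : Fin n), ⟨0, by omega⟩}, {(x : Fin n), ⟨1, by omega⟩},
              Finset.card_pair hx0, Finset.card_pair hx1,
              Finset.mem_insert_self _ _, Finset.mem_insert_self _ _, ?_⟩
            have e1 : gcol n hn {(x : Fin n), ⟨0, by omega⟩} = ⟨1, by omega⟩ := by
              simp [gcol, Ne.symm hx0, Ne.symm hx1, h01, Ne.symm h01]
            have e2 : gcol n hn {(x : Fin n), ⟨1, by omega⟩} = ⟨0, by omega⟩ := by
              simp [gcol, Ne.symm hx0, Ne.symm h01]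
            rw [e1, e2]; exact Ne.symm h01
      obtain ⟨p, q, hpc, hqc, hxp, hxq, hpq⟩ := key
      have h2 : 1 < (phi hn '' (LG n).neighborSet (Sum.inl x)).ncard := by
        rw [Set.one_lt_ncard (Set.toFinite _)]
        refine ⟨gcol n hn p, ⟨Sum.inr ⟨p, mem_blocks hpc⟩, ?_, rfl⟩,
                gcol n hn q, ⟨Sum.inr ⟨q, mem_blocks hqc⟩, ?_, rfl⟩, hpq⟩
        · exact (adj_inl_inr x ⟨p, mem_blocks hpc⟩).mpr hxp
        · exact (adj_inl_inr x ⟨q, mem_blocks hqc⟩).mpr hxq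
      omega
    · rw [deg_inr b]
      obtain ⟨u, v, huv, hb⟩ := Finset.card_eq_two.mp (blk_card b)
      have h2 : 1 < (phi hn '' (LG n).neighborSet (Sum.inr b)).ncard := by
        rw [Set.one_lt_ncard (Set.toFinite _)]
        have hu : (LG n).Adj (Sum.inr b) (Sum.inl ⟨u, Finset.mem_univ _⟩) := by
          apply (LG n).adj_symm
          rw [adj_inl_inr, hb]
          exact Finset.mem_insert_self _ _
        have hv : (LG n).Adj (Sum.inr b) (Sum.inl ⟨v, Finset.mem_univ _⟩) := by
          apply (LG n).adj_symm
          rw [adj_inl_inr, hb]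
          exact Finset.mem_insert_of_mem (Finset.mem_singleton_self _)
        exact ⟨u, ⟨Sum.inl ⟨u, Finset.mem_univ _⟩, hu, rfl⟩,
               v, ⟨Sum.inl ⟨v, Finset.mem_univ _⟩, hv, rfl⟩, huv⟩
      omega

end LeviAux

open LeviAux

/-- For every `Δ ≥ 4`, the Levi graph of the Steiner system `S(2, 2, Δ + 1)` whose blocks
are all `2`-element subsets of a `(Δ + 1)`-element set (i.e. the full subdivision of
`K_{Δ+1}`) is a bipartite graph with maximum degree `Δ` and `2`-hued chromatic number
`Δ + 1`. -/
theorem subdivided_complete_graph_two_hued (Δ : ℕ) (hΔ : 4 ≤ Δ) :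
    (leviGraph (Finset.univ : Finset (Fin (Δ + 1)))
        (Finset.univ.powersetCard 2)).Colorable 2 ∧
    maxDeg (leviGraph (Finset.univ : Finset (Fin (Δ + 1)))
        (Finset.univ.powersetCard 2)) = Δ ∧
    rHuedChromNum (leviGraph (Finset.univ : Finset (Fin (Δ + 1)))
        (Finset.univ.powersetCard 2)) 2 = Δ + 1 := by
  have hn : 5 ≤ Δ + 1 := by omega
  refine ⟨?_, ?_, ?_⟩
  · exact ⟨SimpleGraph.Coloring.mk (Sum.elim (fun _ => 0) (fun _ => 1)) (by
      rintro (x | b) (y | c) h <;>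
        simp_all [leviGraph, SimpleGraph.fromRel_adj])⟩
  · unfold maxDeg
    apply le_antisymm
    · apply Finset.sup_le
      rintro (x | b) -
      · rw [deg_inl x]; omega
      · rw [deg_inr b]; omega
    · have := Finset.le_sup (f := fun v => ((LG (Δ+1)).neighborSet v).ncard)
        (Finset.mem_univ (Sum.inl (⟨0, Finset.mem_univ _⟩ : Pts (Δ+1))))
      simp only [deg_inl, Nat.add_sub_cancel] at this
      exact this
  · unfold rHuedChromNum
    apply le_antisymm
    · exact Nat.sInf_le (upper hn)
    · apply le_csInf ⟨Δ + 1, upper hn⟩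
      intro k hk
      by_contra hlt
      exact lower k (by omega) hk
end

section
/- Let n ≥ 2 be an integer and suppose a Steiner system S(2, n + 1, n² + n + 1) (a projective plane of order n) exists. Then there is a bipartite finite simple (n+1)-regular graph G of girth at least 6 with χ_{n+1}(G) ≥ n² + n + 1 = (r − 1)Δ(G) + 1 where r = Δ(G) = n + 1; namely, the Levi graph of the projective plane has these properties. -/
open SimpleGraph

section Levi
variable {α : Type*} (V : Finset α) (B : Finset (Finset α))

lemma levi_adj_lr (x : {x // x ∈ V}) (b : {b // b ∈ B}) :
    (leviGraph V B).Adj (Sum.inl x) (Sum.inr b) ↔ (x : α) ∈ (b : Finset α) := by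
  simp [leviGraph, fromRel_adj]

lemma levi_adj_ll (x y : {x // x ∈ V}) : ¬ (leviGraph V B).Adj (Sum.inl x) (Sum.inl y) := by
  simp [leviGraph, fromRel_adj]

lemma levi_adj_rr (a b : {b // b ∈ B}) : ¬ (leviGraph V B).Adj (Sum.inr a) (Sum.inr b) := by
  simp [leviGraph, fromRel_adj]

lemma levi_nbr_inr (b : {b // b ∈ B}) :
    (leviGraph V B).neighborSet (Sum.inr b) =
      Sum.inl '' {x : {x // x ∈ V} | (x : α) ∈ (b : Finset α)} := by
  ext w
  cases w with
  | inl x => simp [SimpleGraph.mem_neighborSet, (leviGraph V B).adj_comm, levi_adj_lr]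
  | inr c => simp [SimpleGraph.mem_neighborSet, levi_adj_rr]

lemma levi_nbr_inl (x : {x // x ∈ V}) :
    (leviGraph V B).neighborSet (Sum.inl x) =
      Sum.inr '' {b : {b // b ∈ B} | (x : α) ∈ (b : Finset α)} := by
  ext w
  cases w with
  | inl y => simp [SimpleGraph.mem_neighborSet, levi_adj_ll]
  | inr c => simp [SimpleGraph.mem_neighborSet, levi_adj_lr]

lemma ncard_sub [DecidableEq α] {s : Finset α} (p : α → Prop) [DecidablePred p] :
    {x : {x // x ∈ s} | p (x : α)}.ncard = (s.filter p).card := by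
  classical
  rw [Set.ncard_eq_toFinset_card']
  apply Finset.card_bij (fun (a : {x // x ∈ s}) _ => (a : α))
  · intro a ha
    exact Finset.mem_filter.2 ⟨a.2, by simpa using Set.mem_toFinset.1 ha⟩
  · intro a _ b _ h
    exact Subtype.ext h
  · intro c hc
    refine ⟨⟨c, (Finset.mem_filter.1 hc).1⟩, ?_, rfl⟩
    simpa [Set.mem_toFinset] using (Finset.mem_filter.1 hc).2


lemma point_deg [DecidableEq α] {n : ℕ} (hS : IsSteinerSystem (n+1) (n^2+n+1) V B)
    (x : α) (hx : x ∈ V) (hn : 1 ≤ n) :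
    (B.filter (fun b => x ∈ b)).card = n + 1 := by
  obtain ⟨hV, hB, hU⟩ := hS
  set L := B.filter (fun b => x ∈ b) with hL
  have hmem : ∀ b ∈ L, b ∈ B ∧ x ∈ b := by
    intro b hb; exact Finset.mem_filter.1 hb
  have key : ∀ y, y ∈ V → y ≠ x → ∀ b ∈ L, ∀ c ∈ L, y ∈ b → y ∈ c → b = c := by
    intro y hyV hyx b hb c hc hyb hyc
    have hp2 : ({x, y} : Finset α).card = 2 := by
      rw [Finset.card_insert_of_notMem (by simp [Ne.symm hyx]), Finset.card_singleton]
    have hpV : ({x, y} : Finset α) ⊆ V := by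
      intro z hz; rcases Finset.mem_insert.1 hz with h | h
      · exact h ▸ hx
      · exact (Finset.mem_singleton.1 h) ▸ hyV
    obtain ⟨b0, _, huniq⟩ := hU {x, y} hpV hp2
    have h1 : b = b0 := huniq b ⟨(hmem b hb).1, by
      intro z hz; rcases Finset.mem_insert.1 hz with h | h
      · exact h ▸ (hmem b hb).2
      · exact (Finset.mem_singleton.1 h) ▸ hyb⟩
    have h2 : c = b0 := huniq c ⟨(hmem c hc).1, by
      intro z hz; rcases Finset.mem_insert.1 hz with h | h
      · exact h ▸ (hmem c hc).2
      · exact (Finset.mem_singleton.1 h) ▸ hyc⟩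
    rw [h1, h2]
  have hdisj : ∀ b ∈ L, ∀ c ∈ L, b ≠ c → Disjoint (b.erase x) (c.erase x) := by
    intro b hb c hc hbc
    rw [Finset.disjoint_left]
    intro y hyb hyc
    obtain ⟨hyx, hyb'⟩ := Finset.mem_erase.1 hyb
    obtain ⟨_, hyc'⟩ := Finset.mem_erase.1 hyc
    exact hbc (key y ((hB b (hmem b hb).1).1 hyb') hyx b hb c hc hyb' hyc')
  have hbu : L.biUnion (fun b => b.erase x) = V.erase x := by
    ext y
    simp only [Finset.mem_biUnion, Finset.mem_erase]
    constructor
    · rintro ⟨b, hb, hy⟩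
      exact ⟨hy.1, (hB b (hmem b hb).1).1 hy.2⟩
    · rintro ⟨hyx, hyV⟩
      have hp2 : ({x, y} : Finset α).card = 2 := by
        rw [Finset.card_insert_of_notMem (by simp [Ne.symm hyx]), Finset.card_singleton]
      have hpV : ({x, y} : Finset α) ⊆ V := by
        intro z hz; rcases Finset.mem_insert.1 hz with h | h
        · exact h ▸ hx
        · exact (Finset.mem_singleton.1 h) ▸ hyV
      obtain ⟨b, ⟨hbB, hpb⟩, _⟩ := hU {x, y} hpV hp2
      refine ⟨b, Finset.mem_filter.2 ⟨hbB, hpb (by simp)⟩, ⟨hyx, hpb (by simp)⟩⟩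
  have hsum : (L.biUnion (fun b => b.erase x)).card = L.card * n := by
    rw [Finset.card_biUnion hdisj]
    rw [Finset.sum_congr rfl (fun b hb => ?_), Finset.sum_const, smul_eq_mul]
    rw [Finset.card_erase_of_mem (hmem b hb).2, (hB b (hmem b hb).1).2]; omega
  have hVc : (V.erase x).card = n^2 + n := by
    rw [Finset.card_erase_of_mem hx, hV]; omega
  have : L.card * n = (n + 1) * n := by
    rw [← hsum, hbu, hVc]; ring
  exact Nat.eq_of_mul_eq_mul_right (by omega) this

lemma levi_deg [DecidableEq α] {n : ℕ} (hS : IsSteinerSystem (n+1) (n^2+n+1) V B)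
    (hn : 1 ≤ n) (v : {x // x ∈ V} ⊕ {b // b ∈ B}) :
    ((leviGraph V B).neighborSet v).ncard = n + 1 := by
  cases v with
  | inl x =>
      classical
      rw [levi_nbr_inl, Set.ncard_image_of_injective _ Sum.inr_injective,
        ncard_sub (s := B) (fun t => (x : α) ∈ t)]
      exact point_deg V B hS x x.2 hn
  | inr b =>
      rw [levi_nbr_inr, Set.ncard_image_of_injective _ Sum.inl_injective, ncard_sub (s := V) (fun y => y ∈ (b : Finset α))]
      have hsub := (hS.2.1 b.1 b.2).1
      have : V.filter (fun y => y ∈ (b : Finset α)) = (b : Finset α) := by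
        ext y; simp only [Finset.mem_filter]
        exact ⟨fun h => h.2, fun h => ⟨hsub h, h⟩⟩
      rw [this, (hS.2.1 b.1 b.2).2]

def side {α : Type*} {V : Finset α} {B : Finset (Finset α)} : ({x // x ∈ V} ⊕ {b // b ∈ B}) → ℕ :=
  Sum.elim (fun _ => 0) (fun _ => 1)

lemma levi_adj_side {u w : {x // x ∈ V} ⊕ {b // b ∈ B}} (h : (leviGraph V B).Adj u w) :
    side u + side w = 1 := by
  cases u with
  | inl x => cases w with
    | inl y => exact absurd h (levi_adj_ll V B x y)
    | inr b => rfl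
  | inr b => cases w with
    | inl y => rfl
    | inr c => exact absurd h (levi_adj_rr V B b c)

lemma levi_walk_parity {u w : {x // x ∈ V} ⊕ {b // b ∈ B}} (p : (leviGraph V B).Walk u w) :
    (p.length + side u + side w) % 2 = 0 := by
  induction p with
  | nil => simp only [SimpleGraph.Walk.length_nil]; omega
  | @cons a b c h q ih =>
      have h1 := levi_adj_side V B h
      simp only [SimpleGraph.Walk.length_cons]
      omega

lemma no_two_blocks {n : ℕ} (hS : IsSteinerSystem (n+1) (n^2+n+1) V B)
    {x y : α} (hx : x ∈ V) (hy : y ∈ V) (hxy : x ≠ y)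
    {b c : Finset α} (hb : b ∈ B) (hc : c ∈ B)
    (hxb : x ∈ b) (hyb : y ∈ b) (hxc : x ∈ c) (hyc : y ∈ c) : b = c := by
  classical
  obtain ⟨_, _, hU⟩ := hS
  have hp2 : ({x, y} : Finset α).card = 2 := by
    rw [Finset.card_insert_of_notMem (by simp [hxy]), Finset.card_singleton]
  have hpV : ({x, y} : Finset α) ⊆ V := by
    intro z hz; rcases Finset.mem_insert.1 hz with h | h
    · exact h ▸ hx
    · exact (Finset.mem_singleton.1 h) ▸ hy
  obtain ⟨b0, _, huniq⟩ := hU {x, y} hpV hp2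
  have h1 : b = b0 := huniq b ⟨hb, by
    intro z hz; rcases Finset.mem_insert.1 hz with h | h
    · exact h ▸ hxb
    · exact (Finset.mem_singleton.1 h) ▸ hyb⟩
  have h2 : c = b0 := huniq c ⟨hc, by
    intro z hz; rcases Finset.mem_insert.1 hz with h | h
    · exact h ▸ hxc
    · exact (Finset.mem_singleton.1 h) ▸ hyc⟩
  rw [h1, h2]

lemma levi_girth {n : ℕ} (hS : IsSteinerSystem (n+1) (n^2+n+1) V B) :
    (6 : ℕ∞) ≤ (leviGraph V B).egirth := by
  rw [le_egirth]
  intro a w hw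
  have h3 := hw.three_le_length
  have hpar := levi_walk_parity V B w
  suffices h : 6 ≤ w.length by exact_mod_cast h
  by_contra hlt
  push_neg at hlt
  have hlen : w.length = 4 := by omega
  clear hpar h3 hlt
  cases w with
  | nil => simp at hlen
  | cons h1 p => cases p with
    | nil => simp at hlen
    | cons h2 q => cases q with
      | nil => simp at hlen
      | cons h3 r => cases r with
        | nil => simp at hlen
        | cons h4 s => cases s with
          | cons h5 t => simp at hlen
          | nil =>
            have hnd := hw.2
            simp [SimpleGraph.Walk.support_cons] at hnd
            -- extract distinctness
            rename_i b c d
            obtain ⟨⟨_, hbd, _⟩, ⟨_, hca⟩, _⟩ := hnd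
            cases a with
            | inl x =>
              cases b with
              | inl y => exact levi_adj_ll V B x y h1
              | inr β =>
                cases c with
                | inr γ => exact levi_adj_rr V B β γ h2
                | inl y =>
                  cases d with
                  | inl z => exact levi_adj_ll V B y z h3
                  | inr γ =>
                    have hxβ := (levi_adj_lr V B x β).1 h1
                    have hyβ := (levi_adj_lr V B y β).1 h2.symm
                    have hyγ := (levi_adj_lr V B y γ).1 h3
                    have hxγ := (levi_adj_lr V B x γ).1 h4.symm
                    have hxy : (x : α) ≠ (y : α) := fun h => hca (by
                      cases x; cases y; simp_all)
                    have hβγ : (β : Finset α) ≠ (γ : Finset α) := fun h => hbd (by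
                      cases β; cases γ; simp_all)
                    exact hβγ (no_two_blocks V B hS x.2 y.2 hxy β.2 γ.2 hxβ hyβ hxγ hyγ)
            | inr β =>
              cases b with
              | inr γ => exact levi_adj_rr V B β γ h1
              | inl x =>
                cases c with
                | inl y => exact levi_adj_ll V B x y h2
                | inr γ =>
                  cases d with
                  | inr δ => exact levi_adj_rr V B γ δ h3
                  | inl y =>
                    have hxβ := (levi_adj_lr V B x β).1 h1.symm
                    have hxγ := (levi_adj_lr V B x γ).1 h2
                    have hyγ := (levi_adj_lr V B y γ).1 h3.symm
                    have hyβ := (levi_adj_lr V B y β).1 h4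
                    have hxy : (x : α) ≠ (y : α) := fun h => hbd (by
                      cases x; cases y; simp_all)
                    have hβγ : (β : Finset α) ≠ (γ : Finset α) := fun h => hca (by
                      cases β; cases γ; simp_all)
                    exact hβγ (no_two_blocks V B hS x.2 y.2 hxy β.2 γ.2 hxβ hyβ hxγ hyγ)

end Levi

/-- If a projective plane of order `n ≥ 2` (a Steiner system `S(2, n+1, n²+n+1)`) exists,
then its Levi graph is a bipartite `(n+1)`-regular graph of girth at least `6` whose
`(n+1)`-hued chromatic number is at least `n² + n + 1 = (r - 1)Δ + 1`, where
`r = Δ(G) = n + 1`. -/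
theorem projective_plane_levi {α : Type*} {n : ℕ} (hn : 2 ≤ n)
    (V : Finset α) (B : Finset (Finset α))
    (hS : IsSteinerSystem (n + 1) (n ^ 2 + n + 1) V B) :
    (leviGraph V B).Colorable 2 ∧
    (∀ v, ((leviGraph V B).neighborSet v).ncard = n + 1) ∧
    (6 : ℕ∞) ≤ (leviGraph V B).egirth ∧
    maxDeg (leviGraph V B) = n + 1 ∧
    n ^ 2 + n + 1 ≤ rHuedChromNum (leviGraph V B) (n + 1) ∧
    n ^ 2 + n + 1 = ((n + 1) - 1) * maxDeg (leviGraph V B) + 1 := by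
  classical
  have hn1 : 1 ≤ n := by omega
  have hdeg : ∀ v, ((leviGraph V B).neighborSet v).ncard = n + 1 :=
    levi_deg V B hS hn1
  have hVne : V.Nonempty := Finset.card_pos.1 (by rw [hS.1]; positivity)
  have hne : Nonempty ({x // x ∈ V} ⊕ {b // b ∈ B}) :=
    ⟨Sum.inl ⟨hVne.choose, hVne.choose_spec⟩⟩
  have hmax : maxDeg (leviGraph V B) = n + 1 := by
    unfold maxDeg
    rw [Finset.sup_congr rfl (fun v _ => hdeg v)]
    exact Finset.sup_const Finset.univ_nonempty _
  refine ⟨?_, hdeg, levi_girth V B hS, hmax, ?_, by rw [hmax, Nat.add_sub_cancel]; ring⟩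
  · exact ⟨SimpleGraph.Coloring.mk (Sum.elim (fun _ => (0 : Fin 2)) (fun _ => 1)) (by
      intro u v h
      cases u with
      | inl x => cases v with
        | inl y => exact absurd h (levi_adj_ll V B x y)
        | inr b => simp
      | inr b => cases v with
        | inl y => simp
        | inr c => exact absurd h (levi_adj_rr V B b c))⟩
  · apply le_csInf
    · refine ⟨Fintype.card ({x // x ∈ V} ⊕ {b // b ∈ B}),
        fun v => (Fintype.equivFin _) v, fun u v h he => h.ne ((Fintype.equivFin _).injective he),
        fun v => ?_⟩
      rw [Set.ncard_image_of_injective _ (Fintype.equivFin _).injective]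
      exact min_le_right _ _
    · rintro k ⟨φ, hp, hh⟩
      have hinj : Function.Injective (fun x : {x // x ∈ V} => φ (Sum.inl x)) := by
        intro x y he
        by_contra hxyne
        have hxy : (x : α) ≠ (y : α) := fun h => hxyne (Subtype.ext h)
        have hp2 : ({(x : α), (y : α)} : Finset α).card = 2 := by
          rw [Finset.card_insert_of_notMem (by simp [hxy]), Finset.card_singleton]
        have hpV : ({(x : α), (y : α)} : Finset α) ⊆ V := by
          intro z hz; rcases Finset.mem_insert.1 hz with h | h
          · exact h ▸ x.2
          · exact (Finset.mem_singleton.1 h) ▸ y.2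
        obtain ⟨b, ⟨hbB, hpb⟩, -⟩ := hS.2.2 {(x : α), (y : α)} hpV hp2
        set c : Sum {x // x ∈ V} {b // b ∈ B} := Sum.inr ⟨b, hbB⟩ with hc
        have hxN : Sum.inl x ∈ (leviGraph V B).neighborSet c :=
          ((levi_adj_lr V B x ⟨b, hbB⟩).2 (hpb (by simp))).symm
        have hyN : Sum.inl y ∈ (leviGraph V B).neighborSet c :=
          ((levi_adj_lr V B y ⟨b, hbB⟩).2 (hpb (by simp))).symm
        have hmin := hh c
        rw [hdeg c, min_self] at hmin
        have hle : (φ '' (leviGraph V B).neighborSet c).ncard ≤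
            ((leviGraph V B).neighborSet c).ncard :=
          Set.ncard_image_le (Set.toFinite _)
        have hinjOn : Set.InjOn φ ((leviGraph V B).neighborSet c) := by
          apply Set.injOn_of_ncard_image_eq _ (Set.toFinite _)
          rw [hdeg c] at hle ⊢; omega
        exact hxyne (Sum.inl_injective (hinjOn hxN hyN he))
      calc n ^ 2 + n + 1 = Fintype.card {x // x ∈ V} := by
            rw [Fintype.card_coe, hS.1]
        _ ≤ Fintype.card (Fin k) := Fintype.card_le_of_injective _ hinj
        _ = k := Fintype.card_fin k
end
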